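/- arXiv:2304.05070 — 4 statements merged into one kernel-verified Lean document; each statement's English description precedes it below -/
import Mathlib

section
/- Let S be a schema and T a graph transformation that is trimmed modulo S and satisfies (T,S) ⊨ ⊤ ⊑ ⊔Γ_T. Let 𝒯 be the set of all L0 statements over Γ_T and Σ_T that are satisfied by every graph in the family { T(G) : G ∈ L(S) }. Then 𝒯 is coherent, so there is a unique schema S' over Γ_T and Σ_T with T_{S'} = 𝒯, and this S' is the containment-minimal schema over Γ_T and Σ_T such that T(G) ∈ L(S') for every G ∈ L(S): indeed T(G) ∈ L(S') for all G ∈ L(S), and L(S') ⊆ L(S'') for every schema S'' over Γ_T and Σ_T with T(G) ∈ L(S'') for all G ∈ L(S). -/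
namespace GDB

/-! ## Signed roles (two-way edge labels) -/

/-- A signed role: an edge label traversed forwards or backwards. -/
inductive SRole (E : Type) : Type
  | fwd (r : E)
  | bwd (r : E)

/-- The underlying edge label of a signed role. -/
def SRole.base {E : Type} : SRole E → E
  | .fwd r => r
  | .bwd r => r

/-- The inverse of a signed role. -/
def SRole.inv {E : Type} : SRole E → SRole E
  | .fwd r => .bwd r
  | .bwd r => .fwd r

/-! ## Graphs -/

/-- A graph over node labels `N` and edge labels `E`; nodes are drawn from
the countably infinite set of node identifiers `ℕ`. -/
structure Graph (N E : Type) : Type where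
  dom : Set ℕ
  nodeLab : N → Set ℕ
  edgeRel : E → Set (ℕ × ℕ)
  nodeLab_sub : ∀ A, nodeLab A ⊆ dom
  edgeRel_dom : ∀ r u v, (u, v) ∈ edgeRel r → u ∈ dom ∧ v ∈ dom

namespace Graph

variable {N E : Type}

/-- Interpretation of a signed role. -/
def srel (G : Graph N E) : SRole E → Set (ℕ × ℕ)
  | .fwd r => G.edgeRel r
  | .bwd r => {p | (p.2, p.1) ∈ G.edgeRel r}

/-- A graph is finite if its domain is finite and all but finitely many labels
have empty interpretation. -/
def Finite (G : Graph N E) : Prop :=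
  G.dom.Finite ∧ {A | G.nodeLab A ≠ ∅}.Finite ∧ {r | G.edgeRel r ≠ ∅}.Finite

/-- The `R`-successors of node `u` that carry label `B`. -/
def succ (G : Graph N E) (R : SRole E) (B : N) (u : ℕ) : Set ℕ :=
  {v | (u, v) ∈ G.srel R ∧ v ∈ G.nodeLab B}

/-- A graph is over node labels `Γ₀` and edge labels `σ₀` if it uses no label
outside of these sets. -/
def Over (G : Graph N E) (Γ₀ : Set N) (σ₀ : Set E) : Prop :=
  (∀ A, A ∉ Γ₀ → G.nodeLab A = ∅) ∧ (∀ r, r ∉ σ₀ → G.edgeRel r = ∅)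

/-- The set of (labelled) edges of a graph, as triples. -/
def edgeTriples (G : Graph N E) : Set (E × ℕ × ℕ) :=
  {t | (t.2.1, t.2.2) ∈ G.edgeRel t.1}

/-- Undirected adjacency. -/
def Adj (G : Graph N E) (u v : ℕ) : Prop :=
  ∃ r, (u, v) ∈ G.edgeRel r ∨ (v, u) ∈ G.edgeRel r

/-- The graph is connected (as an undirected multigraph). -/
def ConnectedG (G : Graph N E) : Prop :=
  ∀ u ∈ G.dom, ∀ v ∈ G.dom, Relation.ReflTransGen G.Adj u v

/-- The graph is acyclic (as an undirected multigraph): there is no closed walk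
using pairwise distinct edges. -/
def AcyclicG (G : Graph N E) : Prop :=
  ¬ ∃ (k : ℕ) (es : Fin (k + 1) → E × ℕ × ℕ) (vs : Fin (k + 2) → ℕ),
      Function.Injective es ∧ vs 0 = vs (Fin.last (k + 1)) ∧
      ∀ i : Fin (k + 1), es i ∈ G.edgeTriples ∧
        ((es i).2 = (vs i.castSucc, vs i.succ) ∨ (es i).2 = (vs i.succ, vs i.castSucc))

/-- The degree of a node: the number of incident edges, a loop contributing 2. -/
noncomputable def degree (G : Graph N E) (u : ℕ) : ℕ :=
  {p : (E × ℕ × ℕ) × Bool |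
      p.1 ∈ G.edgeTriples ∧ (if p.2 then p.1.2.1 = u else p.1.2.2 = u)}.ncard

/-- The node `u` has finitely many incident edges. -/
def FinBranching (G : Graph N E) (u : ℕ) : Prop :=
  {t | t ∈ G.edgeTriples ∧ (t.2.1 = u ∨ t.2.2 = u)}.Finite

/-- The subgraph of `G` induced by the set `X` of nodes. -/
def induce (G : Graph N E) (X : Set ℕ) : Graph N E where
  dom := G.dom ∩ X
  nodeLab A := G.nodeLab A ∩ X
  edgeRel r := {p | p ∈ G.edgeRel r ∧ p.1 ∈ X ∧ p.2 ∈ X}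
  nodeLab_sub := by
    intro A u hu
    exact ⟨G.nodeLab_sub A hu.1, hu.2⟩
  edgeRel_dom := by
    intro r u v h
    exact ⟨⟨(G.edgeRel_dom r u v h.1).1, h.2.1⟩, ⟨(G.edgeRel_dom r u v h.1).2, h.2.2⟩⟩

/-- Expand a graph with an additional assignment of sets of nodes to node labels. -/
def expand (G : Graph N E) (ext : N → Set ℕ) : Graph N E where
  dom := G.dom
  nodeLab A := G.nodeLab A ∪ (ext A ∩ G.dom)
  edgeRel := G.edgeRel
  nodeLab_sub := by
    intro A u hu
    rcases hu with h | h
    · exact G.nodeLab_sub A h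
    · exact h.2
  edgeRel_dom := G.edgeRel_dom

end Graph

/-! ## Schemas with participation constraints -/

/-- Participation constraint symbols: `?`, `1`, `+`, `*`, `0`. -/
inductive Card : Type
  | opt   -- ?
  | one   -- 1
  | plus  -- +
  | star  -- *
  | zero  -- 0

/-- The set of cardinalities allowed by each participation constraint symbol. -/
def Card.allowed : Card → Set ℕ
  | .opt => {0, 1}
  | .one => {1}
  | .plus => {n | 1 ≤ n}
  | .star => Set.univ
  | .zero => {0}

/-- A set of successors satisfies a participation constraint. -/
def Card.ok (c : Card) (s : Set ℕ) : Prop :=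
  c = Card.star ∨ (s.Finite ∧ s.ncard ∈ c.allowed)

/-- The preorder on participation constraints: containment of allowed cardinalities. -/
def Card.le (c d : Card) : Prop := c.allowed ⊆ d.allowed

/-- A schema: finite sets of allowed node and edge labels and participation
constraints. -/
structure Schema (N E : Type) : Type where
  nlab : Finset N
  elabs : Finset E
  delta : N → SRole E → N → Card

/-- A schema is over `Γ₀` and `σ₀`: its label sets are `Γ₀` and `σ₀` (and its
participation-constraint function is trivial outside of its intended domain
`Γ₀ × σ₀± × Γ₀`, encoding a function with that restricted domain). -/
def Schema.Over {N E : Type} (S : Schema N E) (Γ₀ : Set N) (σ₀ : Set E) : Prop :=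
  (↑S.nlab : Set N) = Γ₀ ∧ (↑S.elabs : Set E) = σ₀ ∧
  ∀ (A : N) (R : SRole E) (B : N),
    ¬(A ∈ Γ₀ ∧ SRole.base R ∈ σ₀ ∧ B ∈ Γ₀) → S.delta A R B = Card.star

/-- A graph conforms to a schema: every node has exactly one label, which is
an allowed node label, every edge label is allowed, and all participation
constraints hold. -/
def Conforms {N E : Type} (G : Graph N E) (S : Schema N E) : Prop :=
  (∀ u ∈ G.dom, ∃! A, u ∈ G.nodeLab A) ∧
  (∀ A, (G.nodeLab A).Nonempty → A ∈ S.nlab) ∧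
  (∀ r, (G.edgeRel r).Nonempty → r ∈ S.elabs) ∧
  (∀ A ∈ S.nlab, ∀ B ∈ S.nlab, ∀ R : SRole E, SRole.base R ∈ S.elabs →
    ∀ u ∈ G.nodeLab A, Card.ok (S.delta A R B) (G.succ R B u))

/-- The set of finite graphs conforming to a schema. -/
def L {N E : Type} (S : Schema N E) : Set (Graph N E) :=
  {G | Graph.Finite G ∧ Conforms G S}

/-! ## ALCIF concepts and TBoxes -/

/-- ALCIF concepts. -/
inductive Concept (N E : Type) : Type
  | bot
  | atom (A : N)
  | inter (C D : Concept N E)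
  | neg (C : Concept N E)
  | ex (R : SRole E) (C : Concept N E)
  | le1 (R : SRole E) (C : Concept N E)

/-- Interpretation of ALCIF concepts in a graph. -/
def Concept.interp {N E : Type} (G : Graph N E) : Concept N E → Set ℕ
  | .bot => ∅
  | .atom A => G.nodeLab A
  | .inter C D => Concept.interp G C ∩ Concept.interp G D
  | .neg C => G.dom \ Concept.interp G C
  | .ex R C => {u | u ∈ G.dom ∧ ∃ v, (u, v) ∈ G.srel R ∧ v ∈ Concept.interp G C}
  | .le1 R C => {u | u ∈ G.dom ∧ {v | (u, v) ∈ G.srel R ∧ v ∈ Concept.interp G C}.Subsingleton}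

/-- A concept inclusion. -/
abbrev CI (N E : Type) := Concept N E × Concept N E

/-- A graph satisfies a concept inclusion. -/
def SatCI {N E : Type} (G : Graph N E) (ci : CI N E) : Prop :=
  Concept.interp G ci.1 ⊆ Concept.interp G ci.2

/-- A graph is a model of a TBox. -/
def Models {N E : Type} (G : Graph N E) (T : Set (CI N E)) : Prop :=
  ∀ ci ∈ T, SatCI G ci

/-- The TBox `T_S` corresponding to a schema `S`. -/
def schemaTBox {N E : Type} (S : Schema N E) : Set (CI N E) :=
  {ci | ∃ A ∈ S.nlab, ∃ B ∈ S.nlab, ∃ R : SRole E, SRole.base R ∈ S.elabs ∧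
    (((S.delta A R B = Card.one ∨ S.delta A R B = Card.plus) ∧
        ci = (Concept.atom A, Concept.ex R (Concept.atom B))) ∨
     ((S.delta A R B = Card.one ∨ S.delta A R B = Card.opt ∨ S.delta A R B = Card.zero) ∧
        ci = (Concept.atom A, Concept.le1 R (Concept.atom B))) ∨
     (S.delta A R B = Card.zero ∧
        ci = (Concept.atom A, Concept.neg (Concept.ex R (Concept.atom B)))))}

/-- `T̂_S`: the schema TBox together with disjointness of distinct node labels. -/
def hatTBox {N E : Type} (S : Schema N E) : Set (CI N E) :=
  schemaTBox S ∪ {ci | ∃ A ∈ S.nlab, ∃ B ∈ S.nlab, A ≠ B ∧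
    ci = (Concept.inter (Concept.atom A) (Concept.atom B), Concept.bot)}

/-! ## L0 statements -/

/-- L0 statements: `A ⊑ ∃R.B`, `A ⊑ ∄R.B`, `A ⊑ ∃≤1 R.B`. -/
inductive L0Stmt (N E : Type) : Type
  | exis (A : N) (R : SRole E) (B : N)
  | nex (A : N) (R : SRole E) (B : N)
  | le1 (A : N) (R : SRole E) (B : N)

/-- Satisfaction of an L0 statement in a graph. -/
def L0Sat {N E : Type} (G : Graph N E) : L0Stmt N E → Prop
  | .exis A R B => ∀ u ∈ G.nodeLab A, ∃ v, (u, v) ∈ G.srel R ∧ v ∈ G.nodeLab B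
  | .nex A R B => ∀ u ∈ G.nodeLab A, ¬ ∃ v, (u, v) ∈ G.srel R ∧ v ∈ G.nodeLab B
  | .le1 A R B => ∀ u ∈ G.nodeLab A, (G.succ R B u).Subsingleton

/-- An L0 statement is over node labels `Γ₀` and edge labels `σ₀`. -/
def L0Stmt.Over {N E : Type} (st : L0Stmt N E) (Γ₀ : Set N) (σ₀ : Set E) : Prop :=
  match st with
  | .exis A R B => A ∈ Γ₀ ∧ SRole.base R ∈ σ₀ ∧ B ∈ Γ₀
  | .nex A R B => A ∈ Γ₀ ∧ SRole.base R ∈ σ₀ ∧ B ∈ Γ₀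
  | .le1 A R B => A ∈ Γ₀ ∧ SRole.base R ∈ σ₀ ∧ B ∈ Γ₀

/-- Coherence of an L0 TBox. -/
def Coherent {N E : Type} (T : Set (L0Stmt N E)) : Prop :=
  (∀ (A : N) (R : SRole E) (B : N),
      ¬(L0Stmt.exis A R B ∈ T ∧ L0Stmt.nex A R B ∈ T)) ∧
  (∀ (A : N) (R : SRole E) (B : N), L0Stmt.nex A R B ∈ T → L0Stmt.le1 A R B ∈ T)

/-- The L0 TBox corresponding to a schema. -/
def schemaL0 {N E : Type} (S : Schema N E) : Set (L0Stmt N E) :=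
  {st | ∃ A ∈ S.nlab, ∃ B ∈ S.nlab, ∃ R : SRole E, SRole.base R ∈ S.elabs ∧
    (((S.delta A R B = Card.one ∨ S.delta A R B = Card.plus) ∧ st = L0Stmt.exis A R B) ∨
     ((S.delta A R B = Card.one ∨ S.delta A R B = Card.opt ∨ S.delta A R B = Card.zero) ∧
        st = L0Stmt.le1 A R B) ∨
     (S.delta A R B = Card.zero ∧ st = L0Stmt.nex A R B))}

/-! ## Two-way regular path expressions and C2RPQs -/

/-- Two-way regular path expressions. -/
inductive RE (N E : Type) : Type
  | empty
  | eps
  | atom (A : N)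
  | role (R : SRole E)
  | comp (e f : RE N E)
  | plus (e f : RE N E)
  | star (e : RE N E)

/-- Semantics of a two-way regular path expression: the binary relation of
pairs of nodes connected by a witnessing path. -/
def RE.sem {N E : Type} (G : Graph N E) : RE N E → Set (ℕ × ℕ)
  | .empty => ∅
  | .eps => {p | p.1 = p.2 ∧ p.1 ∈ G.dom}
  | .atom A => {p | p.1 = p.2 ∧ p.1 ∈ G.nodeLab A}
  | .role R => G.srel R
  | .comp e f => {p | ∃ w, (p.1, w) ∈ RE.sem G e ∧ (w, p.2) ∈ RE.sem G f}
  | .plus e f => RE.sem G e ∪ RE.sem G f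
  | .star e => {p | p.1 ∈ G.dom ∧ Relation.ReflTransGen (fun a b => (a, b) ∈ RE.sem G e) p.1 p.2}

/-- The node labels occurring in a two-way regular path expression. -/
def RE.nlabels {N E : Type} : RE N E → Set N
  | .atom A => {A}
  | .comp e f => RE.nlabels e ∪ RE.nlabels f
  | .plus e f => RE.nlabels e ∪ RE.nlabels f
  | .star e => RE.nlabels e
  | _ => ∅

/-- A C2RPQ with free variables `V`: a finite conjunction of atoms `φ(z, z')`
whose variables are either free (`V`) or among `n` existentially quantified
variables. A Boolean C2RPQ is one with `V = Empty`. -/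
structure C2RPQ (N E : Type) (V : Type) : Type where
  n : ℕ
  atoms : List (RE N E × ((V ⊕ Fin n) × (V ⊕ Fin n)))

/-- The answers of a C2RPQ in a graph: assignments of nodes to the free
variables that can be extended to the existential variables so that all atoms
are satisfied. -/
def C2RPQ.answers {N E V : Type} (q : C2RPQ N E V) (G : Graph N E) : Set (V → ℕ) :=
  {t | (∀ v, t v ∈ G.dom) ∧ ∃ s : Fin q.n → ℕ, (∀ i, s i ∈ G.dom) ∧
    ∀ a ∈ q.atoms, (Sum.elim t s a.2.1, Sum.elim t s a.2.2) ∈ RE.sem G a.1}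

/-- Answers of a union of C2RPQs. -/
def UAnswers {N E V : Type} (Q : List (C2RPQ N E V)) (G : Graph N E) : Set (V → ℕ) :=
  {t | ∃ q ∈ Q, t ∈ q.answers G}

/-- A trivial atom: `∅(x,x)`, `ε(x,x)` or `A(x,x)`. -/
def TrivialAtom {N E α : Type} (a : RE N E × α × α) : Prop :=
  a.2.1 = a.2.2 ∧ (a.1 = RE.empty ∨ a.1 = RE.eps ∨ ∃ A, a.1 = RE.atom A)

/-- Acyclicity of a C2RPQ: the multigraph on its variables with one edge per
non-trivial atom has no path of pairwise distinct edges visiting a node twice. -/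
def C2RPQ.Acyclic {N E V : Type} (q : C2RPQ N E V) : Prop :=
  ¬ ∃ (k : ℕ) (es : Fin (k + 1) → Fin q.atoms.length) (vs : Fin (k + 2) → V ⊕ Fin q.n),
      Function.Injective es ∧ (∃ i j : Fin (k + 2), i ≠ j ∧ vs i = vs j) ∧
      ∀ i : Fin (k + 1), ¬ TrivialAtom (q.atoms.get (es i)) ∧
        ((q.atoms.get (es i)).2 = (vs i.castSucc, vs i.succ) ∨
         (q.atoms.get (es i)).2 = (vs i.succ, vs i.castSucc))

/-- Adjacency of variables in the multigraph of a C2RPQ. -/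
def C2RPQ.VarAdj {N E V : Type} (q : C2RPQ N E V) (x y : V ⊕ Fin q.n) : Prop :=
  ∃ a ∈ q.atoms, (a.2 = (x, y) ∨ a.2 = (y, x))

/-- Connectedness of the multigraph of a C2RPQ. -/
def C2RPQ.Connected {N E V : Type} (q : C2RPQ N E V) : Prop :=
  ∀ x y : V ⊕ Fin q.n, Relation.ReflTransGen q.VarAdj x y

/-- A unary 2RPQ: a single-atom query of the form `∃y. φ(x,y)` or `∃y. φ(y,x)`. -/
def IsUnary2RPQ {N E : Type} (q : C2RPQ N E (Fin 1)) : Prop :=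
  ∃ φ : RE N E,
    q = ⟨1, [(φ, (Sum.inl (0 : Fin 1), Sum.inr (0 : Fin 1)))]⟩ ∨
    q = ⟨1, [(φ, (Sum.inr (0 : Fin 1), Sum.inl (0 : Fin 1)))]⟩

/-- A Boolean 2RPQ: a Boolean query with a single atom. -/
def IsBoolean2RPQ {N E : Type} (q : C2RPQ N E Empty) : Prop :=
  ∃ (φ : RE N E) (z z' : Empty ⊕ Fin q.n), q.atoms = [(φ, (z, z'))]

/-! ## The query rewriting `P̂` -/

/-- The disjunction `A₁ + ⋯ + A_n` of all node labels of a schema. -/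
noncomputable def labelUnion {N E : Type} (S : Schema N E) : RE N E :=
  S.nlab.toList.foldr (fun A e => RE.plus (RE.atom A) e) RE.empty

/-- The rewriting of a two-way regular expression: insert the disjunction of
all node labels of `S` before and after every edge label, and replace labels
not in `Γ_S ∪ Σ_S±` by `∅`. -/
noncomputable def RE.hat {N E : Type} [DecidableEq N] [DecidableEq E] (S : Schema N E) : RE N E → RE N E
  | .empty => .empty
  | .eps => .eps
  | .atom A => if A ∈ S.nlab then .atom A else .empty
  | .role R => if SRole.base R ∈ S.elabs then
      .comp (labelUnion S) (.comp (.role R) (labelUnion S)) else .empty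
  | .comp e f => .comp (RE.hat S e) (RE.hat S f)
  | .plus e f => .plus (RE.hat S e) (RE.hat S f)
  | .star e => .star (RE.hat S e)

/-- The rewriting `q̂` of a C2RPQ. -/
noncomputable def C2RPQ.hat {N E V : Type} [DecidableEq N] [DecidableEq E] (S : Schema N E)
    (q : C2RPQ N E V) : C2RPQ N E V :=
  { n := q.n, atoms := q.atoms.map (fun a => (RE.hat S a.1, a.2)) }

/-! ## Graph transformations -/

/-- A family of node constructors: for every node label `A`, an injective
function `f_A : ℕ^{k_A} → ℕ`, the ranges being pairwise disjoint. -/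
structure Constructors (N : Type) : Type where
  arity : N → ℕ
  f : (A : N) → (Fin (arity A) → ℕ) → ℕ
  inj : ∀ A, Function.Injective (f A)
  disj : ∀ A B, A ≠ B → ∀ s t, f A s ≠ f B t

/-- A node rule `A(f_A(x̄)) ← q(x̄)` with acyclic body. -/
structure NodeRule (N E : Type) (F : Constructors N) : Type where
  head : N
  body : C2RPQ N E (Fin (F.arity head))
  acyc : body.Acyclic

/-- An edge rule `r(f_A(x̄), f_B(ȳ)) ← q(x̄, ȳ)` with acyclic body. -/
structure EdgeRule (N E : Type) (F : Constructors N) : Type where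
  lab : E
  src : N
  tgt : N
  body : C2RPQ N E (Fin (F.arity src) ⊕ Fin (F.arity tgt))
  acyc : body.Acyclic

/-- A graph transformation: a finite set of node and edge rules. -/
structure Transformation (N E : Type) (F : Constructors N) : Type where
  nodeRules : List (NodeRule N E F)
  edgeRules : List (EdgeRule N E F)

variable {N E : Type}

/-- The result of applying a transformation to a graph. -/
def Transformation.apply {F : Constructors N} (T : Transformation N E F)
    (G : Graph N E) : Graph N E where
  dom := {u | (∃ ρ ∈ T.nodeRules, ∃ t ∈ ρ.body.answers G, u = F.f ρ.head t) ∨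
              (∃ ρ ∈ T.edgeRules, ∃ t ∈ ρ.body.answers G,
                 u = F.f ρ.src (fun i => t (Sum.inl i)) ∨
                 u = F.f ρ.tgt (fun i => t (Sum.inr i)))}
  nodeLab A := {u | ∃ ρ ∈ T.nodeRules, ρ.head = A ∧
                  ∃ t ∈ ρ.body.answers G, u = F.f ρ.head t}
  edgeRel r := {p | ∃ ρ ∈ T.edgeRules, ρ.lab = r ∧
                  ∃ t ∈ ρ.body.answers G,
                    p.1 = F.f ρ.src (fun i => t (Sum.inl i)) ∧
                    p.2 = F.f ρ.tgt (fun i => t (Sum.inr i))}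
  nodeLab_sub := by
    rintro A u ⟨ρ, hρ, _, t, ht, rfl⟩
    exact Or.inl ⟨ρ, hρ, t, ht, rfl⟩
  edgeRel_dom := by
    rintro r u v ⟨ρ, hρ, _, t, ht, h1, h2⟩
    exact ⟨Or.inr ⟨ρ, hρ, t, ht, Or.inl h1⟩, Or.inr ⟨ρ, hρ, t, ht, Or.inr h2⟩⟩

/-- The node labels used in heads of rules of a transformation (`Γ_T`). -/
def Transformation.nlabels {F : Constructors N} (T : Transformation N E F) : Set N :=
  {A | (∃ ρ ∈ T.nodeRules, ρ.head = A) ∨ ∃ ρ ∈ T.edgeRules, ρ.src = A ∨ ρ.tgt = A}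

/-- The edge labels used in heads of rules of a transformation (`Σ_T`). -/
def Transformation.elabels {F : Constructors N} (T : Transformation N E F) : Set E :=
  {r | ∃ ρ ∈ T.edgeRules, ρ.lab = r}

/-- Answers of the union `Q_A^T` of the bodies of `A`-node rules. -/
def QAans {F : Constructors N} (T : Transformation N E F) (A : N) (G : Graph N E) :
    Set ((Fin (F.arity A)) → ℕ) :=
  {t | ∃ ρ ∈ T.nodeRules, ∃ h : ρ.head = A,
        (fun i => t (Fin.cast (congrArg F.arity h) i)) ∈ ρ.body.answers G}

/-- Answers of the union `Q_{A,R,B}^T` of the bodies of matching edge rules. -/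
def QABans {F : Constructors N} (T : Transformation N E F)
    (A : N) (R : SRole E) (B : N) (G : Graph N E) :
    Set ((Fin (F.arity A) → ℕ) × (Fin (F.arity B) → ℕ)) :=
  match R with
  | SRole.fwd r =>
      {ts | ∃ ρ ∈ T.edgeRules, ρ.lab = r ∧
        ∃ (h1 : ρ.src = A) (h2 : ρ.tgt = B),
          Sum.elim (fun i => ts.1 (Fin.cast (congrArg F.arity h1) i))
                   (fun i => ts.2 (Fin.cast (congrArg F.arity h2) i)) ∈ ρ.body.answers G}
  | SRole.bwd r =>
      {ts | ∃ ρ ∈ T.edgeRules, ρ.lab = r ∧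
        ∃ (h1 : ρ.src = B) (h2 : ρ.tgt = A),
          Sum.elim (fun i => ts.2 (Fin.cast (congrArg F.arity h1) i))
                   (fun i => ts.1 (Fin.cast (congrArg F.arity h2) i)) ∈ ρ.body.answers G}

/-- `(T,S) ⊨ ⊤ ⊑ ⊔Γ_T`: every node of every output graph carries some label in `Γ_T`. -/
def TopCovered {F : Constructors N} (T : Transformation N E F) (S : Schema N E) : Prop :=
  ∀ G ∈ L S, ∀ u ∈ (T.apply G).dom, ∃ A ∈ T.nlabels, u ∈ (T.apply G).nodeLab A

/-- A node rule is productive modulo a schema. -/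
def NodeRule.Productive {F : Constructors N} (ρ : NodeRule N E F) (S : Schema N E) : Prop :=
  ∃ G ∈ L S, (ρ.body.answers G).Nonempty

/-- An edge rule is productive modulo a schema. -/
def EdgeRule.Productive {F : Constructors N} (ρ : EdgeRule N E F) (S : Schema N E) : Prop :=
  ∃ G ∈ L S, (ρ.body.answers G).Nonempty

/-- A transformation is trimmed modulo a schema. -/
def Transformation.Trimmed {F : Constructors N} (T : Transformation N E F)
    (S : Schema N E) : Prop :=
  (∀ ρ ∈ T.nodeRules, ρ.Productive S) ∧
  (∀ ρ ∈ T.edgeRules, ρ.Productive S) ∧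
  (∀ A ∈ T.nlabels, ∃ ρ ∈ T.nodeRules, ρ.head = A) ∧
  (∀ r ∈ T.elabels, ∃ ρ ∈ T.edgeRules, ρ.lab = r)

/-- The set of all L0 statements over `Γ_T`, `Σ_T` satisfied by all outputs of `T`
on inputs conforming to `S`. -/
def elicited {F : Constructors N} (T : Transformation N E F) (S : Schema N E) :
    Set (L0Stmt N E) :=
  {st | L0Stmt.Over st T.nlabels T.elabels ∧ ∀ G ∈ L S, L0Sat (T.apply G) st}

/-! ## Horn-ALCIF -/

/-- Horn-ALCIF concept inclusions; `K`, `K'` are (possibly empty) intersections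
of concept names, represented as lists. -/
inductive HornCI (N E : Type) : Type
  | atom (K : List N) (A : N)                      -- K ⊑ A
  | bot (K : List N)                               -- K ⊑ ⊥
  | all (K : List N) (R : SRole E) (K' : List N)   -- K ⊑ ∀R.K'
  | ex (K : List N) (R : SRole E) (K' : List N)    -- K ⊑ ∃R.K'
  | nex (K : List N) (R : SRole E) (K' : List N)   -- K ⊑ ∄R.K'
  | le1 (K : List N) (R : SRole E) (K' : List N)   -- K ⊑ ∃≤1 R.K'

/-- A node satisfies an intersection of concept names. -/
def conjSat {N E : Type} (G : Graph N E) (K : List N) (u : ℕ) : Prop :=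
  u ∈ G.dom ∧ ∀ A ∈ K, u ∈ G.nodeLab A

/-- Satisfaction of a Horn-ALCIF concept inclusion in a graph. -/
def HornCI.Sat {N E : Type} (G : Graph N E) : HornCI N E → Prop
  | .atom K A => ∀ u, conjSat G K u → u ∈ G.nodeLab A
  | .bot K => ∀ u, ¬ conjSat G K u
  | .all K R K' => ∀ u, conjSat G K u → ∀ v, (u, v) ∈ G.srel R → conjSat G K' v
  | .ex K R K' => ∀ u, conjSat G K u → ∃ v, (u, v) ∈ G.srel R ∧ conjSat G K' v
  | .nex K R K' => ∀ u, conjSat G K u → ¬ ∃ v, (u, v) ∈ G.srel R ∧ conjSat G K' v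
  | .le1 K R K' => ∀ u, conjSat G K u →
      {v | (u, v) ∈ G.srel R ∧ conjSat G K' v}.Subsingleton

/-- The concept names appearing in a Horn-ALCIF concept inclusion. -/
def HornCI.nlabels {N E : Type} : HornCI N E → Set N
  | .atom K A => {B | B ∈ K} ∪ {A}
  | .bot K => {B | B ∈ K}
  | .all K _ K' => {B | B ∈ K} ∪ {B | B ∈ K'}
  | .ex K _ K' => {B | B ∈ K} ∪ {B | B ∈ K'}
  | .nex K _ K' => {B | B ∈ K} ∪ {B | B ∈ K'}
  | .le1 K _ K' => {B | B ∈ K} ∪ {B | B ∈ K'}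

/-- The roles appearing in a Horn-ALCIF concept inclusion. -/
def HornCI.roles {N E : Type} : HornCI N E → Set (SRole E)
  | .atom _ _ => ∅
  | .bot _ => ∅
  | .all _ R _ => {R}
  | .ex _ R _ => {R}
  | .nex _ R _ => {R}
  | .le1 _ R _ => {R}

/-- A graph is a model of a Horn-ALCIF TBox. -/
def HornModels {N E : Type} (G : Graph N E) (T : Set (HornCI N E)) : Prop :=
  ∀ ci ∈ T, ci.Sat G

/-- Unrestricted (finite or infinite) entailment modulo a Horn-ALCIF TBox. -/
def HornEntails {N E : Type} (T : Set (HornCI N E)) (ci : HornCI N E) : Prop :=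
  ∀ G : Graph N E, HornModels G T → ci.Sat G

/-- A finmod cycle `K₁, R₁, …, K_n` (with `K_{n} = K₁`) in a TBox. -/
def IsFinmodCycle {N E : Type} (T : Set (HornCI N E)) (n : ℕ)
    (K : Fin (n + 1) → List N) (R : Fin n → SRole E) : Prop :=
  K (Fin.last n) = K 0 ∧
  ∀ i : Fin n,
    HornEntails T (HornCI.ex (K i.castSucc) (R i) (K i.succ)) ∧
    HornEntails T (HornCI.le1 (K i.succ) (R i).inv (K i.castSucc))

/-- A TBox is closed under reversing finmod cycles. -/
def ReversalClosed {N E : Type} (T : Set (HornCI N E)) : Prop :=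
  ∀ (n : ℕ) (K : Fin (n + 1) → List N) (R : Fin n → SRole E),
    IsFinmodCycle T n K R →
    ∀ i : Fin n,
      HornCI.ex (K i.succ) (R i).inv (K i.castSucc) ∈ T ∧
      HornCI.le1 (K i.castSucc) (R i) (K i.succ) ∈ T

/-- The completion `𝒯*`: the least extension of `𝒯` closed under reversing
finmod cycles (obtained by exhaustively reversing finmod cycles). -/
def completion {N E : Type} (T : Set (HornCI N E)) : Set (HornCI N E) :=
  ⋂₀ {T' | T ⊆ T' ∧ ReversalClosed T'}

/-- A triple `(K, R, K')` is satisfiable modulo a TBox. -/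
def TripleSat {N E : Type} (T : Set (HornCI N E)) (K : List N) (R : SRole E)
    (K' : List N) : Prop :=
  ∃ G : Graph N E, HornModels G T ∧
    ∃ u u', conjSat G K u ∧ (u, u') ∈ G.srel R ∧ conjSat G K' u'

/-- A TBox is S-driven. -/
def SDriven {N E : Type} (S : Schema N E) (T : Set (HornCI N E)) : Prop :=
  (∀ K (R : SRole E) K', HornCI.ex K R K' ∈ T → TripleSat T K R K' →
    ∃ A ∈ S.nlab, ∃ A' ∈ S.nlab, A ∈ K ∧ A' ∈ K' ∧ HornCI.ex [A] R [A'] ∈ T) ∧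
  (∀ K (R : SRole E) K', HornCI.le1 K R K' ∈ T → TripleSat T K R K' →
    ∃ A ∈ S.nlab, ∃ A' ∈ S.nlab, A ∈ K ∧ A' ∈ K' ∧ HornCI.le1 [A] R [A'] ∈ T)

/-! ## Sparsity and skeleta -/

/-- Simple paths in a graph (viewed as an undirected multigraph). -/
structure GPath {N E : Type} (G : Graph N E) : Type where
  len : ℕ
  verts : Fin (len + 1) → ℕ
  edges : Fin len → E × ℕ × ℕ
  verts_mem : ∀ i, verts i ∈ G.dom
  edges_mem : ∀ i, edges i ∈ G.edgeTriples
  conn : ∀ i : Fin len,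
    (edges i).2 = (verts i.castSucc, verts i.succ) ∨
    (edges i).2 = (verts i.succ, verts i.castSucc)

/-- A path is simple: edges are pairwise distinct and no node is repeated,
except that the two endpoints may coincide (forming a cycle). -/
def GPath.Simple {N E : Type} {G : Graph N E} (p : GPath G) : Prop :=
  Function.Injective p.edges ∧
  ∀ i j : Fin (p.len + 1), p.verts i = p.verts j →
    i = j ∨ (i = 0 ∧ j = Fin.last p.len) ∨ (j = 0 ∧ i = Fin.last p.len)

/-- `u` is an endpoint of the path. -/
def GPath.IsEndpoint {N E : Type} {G : Graph N E} (p : GPath G) (u : ℕ) : Prop :=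
  p.verts 0 = u ∨ p.verts (Fin.last p.len) = u

/-- The graph is a `(k, l)`-skeleton: at most `k` distinguished nodes connected
by at most `l` simple paths, pairwise disjoint except possibly at endpoints,
covering all nodes and edges of the graph. -/
def IsSkeleton {N E : Type} (G : Graph N E) (k l : ℕ) : Prop :=
  ∃ (D : Set ℕ) (m : ℕ) (P : Fin m → GPath G),
    D ⊆ G.dom ∧ D.Finite ∧ D.ncard ≤ k ∧ m ≤ l ∧
    (∀ i, (P i).Simple) ∧
    (∀ i, (P i).verts 0 ∈ D ∧ (P i).verts (Fin.last (P i).len) ∈ D) ∧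
    (∀ i j, i ≠ j → ∀ u, u ∈ Set.range (P i).verts → u ∈ Set.range (P j).verts →
      (P i).IsEndpoint u ∧ (P j).IsEndpoint u) ∧
    (∀ u ∈ G.dom, ∃ i, u ∈ Set.range (P i).verts) ∧
    (∀ t ∈ G.edgeTriples, ∃ i a, (P i).edges a = t)

/-- An edge of `G` crossing the boundary of a set `X` of nodes. -/
def Crossing {N E : Type} (G : Graph N E) (X : Set ℕ) (t : E × ℕ × ℕ) : Prop :=
  t ∈ G.edgeTriples ∧ ((t.2.1 ∈ X ∧ t.2.2 ∉ X) ∨ (t.2.1 ∉ X ∧ t.2.2 ∈ X))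

/-- `X` carries a finitely branching tree attached to `base` by a single edge. -/
def IsAttachedTree {N E : Type} (G : Graph N E) (base X : Set ℕ) : Prop :=
  X.Nonempty ∧ X ⊆ G.dom ∧
  (G.induce X).ConnectedG ∧ (G.induce X).AcyclicG ∧
  (∀ u ∈ X, G.FinBranching u) ∧
  (∃! t : E × ℕ × ℕ, Crossing G X t) ∧
  (∀ t, Crossing G X t → (t.2.1 ∈ X → t.2.2 ∈ base) ∧ (t.2.2 ∈ X → t.2.1 ∈ base))

/-- A possibly infinite graph is `c`-sparse: it consists of a finite connected
`c`-sparse graph with finitely many finitely branching trees attached. -/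
def Graph.SparseDecomp {N E : Type} (G : Graph N E) (c : ℕ) : Prop :=
  ∃ (core : Set ℕ) (comps : Set (Set ℕ)),
    core ⊆ G.dom ∧ core.Finite ∧
    (G.induce core).ConnectedG ∧
    (G.induce core).edgeTriples.Finite ∧
    (G.induce core).edgeTriples.ncard ≤ core.ncard + c ∧
    comps.Finite ∧ ⋃₀ comps = G.dom \ core ∧
    (∀ X ∈ comps, ∀ Y ∈ comps, X ≠ Y → Disjoint X Y) ∧
    (∀ X ∈ comps, IsAttachedTree G core X)

/-!
Trimming makes every label `A ∈ Γ_T` occur on some node of some output, so `A ⊑ ∃R.B` and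
`A ⊑ ∄R.B` cannot both be valid on all outputs: the elicited TBox is coherent. A participation
constraint is determined by which of its three L0 statements hold, so on finite graphs
conformance to a schema is the structural conditions (one label per node, labels in `Γ`, `Σ`) plus
validity of `T_S`. Outputs then conform to the schema `S'` of the elicited TBox, and any target
schema `S''` over `Γ_T`, `Σ_T` has `T_{S''} ⊆ T_{S'}`, whence `L(S') ⊆ L(S'')`.
-/

lemma Card.ok_iff {c : Card} {s : Set ℕ} (hs : s.Finite) :
    c.ok s ↔ ((c = Card.one ∨ c = Card.plus) → s.Nonempty) ∧
      ((c = Card.one ∨ c = Card.opt ∨ c = Card.zero) → s.Subsingleton) ∧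
      (c = Card.zero → s = ∅) := by
  have : Finite s := hs
  rw [← Set.ncard_pos hs, ← Set.ncard_le_one_iff_subsingleton, ← Set.ncard_eq_zero hs]
  cases c <;> simp only [Card.ok, Card.allowed, hs, true_and, reduceCtorEq, or_false, false_or,
    or_true, true_imp_iff, false_imp_iff, and_true, Set.mem_insert_iff,
    Set.mem_singleton_iff, Set.mem_ofPred_eq, Set.mem_univ] <;> omega

lemma Card.eq_of_iff {c d : Card}
    (hex : (c = Card.one ∨ c = Card.plus) ↔ (d = Card.one ∨ d = Card.plus))
    (hle : (c = Card.one ∨ c = Card.opt ∨ c = Card.zero) ↔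
      (d = Card.one ∨ d = Card.opt ∨ d = Card.zero))
    (hnex : c = Card.zero ↔ d = Card.zero) : c = d := by
  cases c <;> cases d <;> simp_all

open Classical in
/-- The participation constraint `δ(A,R,B)` read off from whether `A ⊑ ∃R.B` (`ex`),
`A ⊑ ∄R.B` (`nex`) and `A ⊑ ∃≤1 R.B` (`le`) are in a TBox. -/
noncomputable def Card.ofL0 (ex nex le : Prop) : Card :=
  if ex then (if le then Card.one else Card.plus)
  else if nex then Card.zero
  else if le then Card.opt else Card.star

lemma Card.ofL0_spec {ex nex le : Prop} (hcons : ¬(ex ∧ nex)) (hnex : nex → le) :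
    ((Card.ofL0 ex nex le = Card.one ∨ Card.ofL0 ex nex le = Card.plus) ↔ ex) ∧
    ((Card.ofL0 ex nex le = Card.one ∨ Card.ofL0 ex nex le = Card.opt ∨
      Card.ofL0 ex nex le = Card.zero) ↔ le) ∧
    (Card.ofL0 ex nex le = Card.zero ↔ nex) := by
  unfold Card.ofL0
  by_cases ex <;> by_cases nex <;> by_cases le <;> simp_all

lemma exis_mem_schemaL0 {S : Schema N E} {A B : N} {R : SRole E} :
    L0Stmt.exis A R B ∈ schemaL0 S ↔ (A ∈ S.nlab ∧ R.base ∈ S.elabs ∧ B ∈ S.nlab) ∧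
      (S.delta A R B = Card.one ∨ S.delta A R B = Card.plus) := by
  simp [schemaL0]; tauto

lemma le1_mem_schemaL0 {S : Schema N E} {A B : N} {R : SRole E} :
    L0Stmt.le1 A R B ∈ schemaL0 S ↔ (A ∈ S.nlab ∧ R.base ∈ S.elabs ∧ B ∈ S.nlab) ∧
      (S.delta A R B = Card.one ∨ S.delta A R B = Card.opt ∨ S.delta A R B = Card.zero) := by
  simp [schemaL0]; tauto

lemma nex_mem_schemaL0 {S : Schema N E} {A B : N} {R : SRole E} :
    L0Stmt.nex A R B ∈ schemaL0 S ↔ (A ∈ S.nlab ∧ R.base ∈ S.elabs ∧ B ∈ S.nlab) ∧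
      S.delta A R B = Card.zero := by
  simp [schemaL0]; tauto

lemma L0Stmt.over_of_mem_schemaL0 {S : Schema N E} {st : L0Stmt N E} (h : st ∈ schemaL0 S) :
    st.Over S.nlab S.elabs := by
  cases st
  · exact (exis_mem_schemaL0.1 h).1
  · exact (nex_mem_schemaL0.1 h).1
  · exact (le1_mem_schemaL0.1 h).1

theorem Schema.eq_of_schemaL0_eq {S₁ S₂ : Schema N E} {Γ₀ : Set N} {σ₀ : Set E}
    (h₁ : S₁.Over Γ₀ σ₀) (h₂ : S₂.Over Γ₀ σ₀) (h : schemaL0 S₁ = schemaL0 S₂) : S₁ = S₂ := by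
  obtain ⟨nlab₁, elabs₁, δ₁⟩ := S₁
  obtain ⟨nlab₂, elabs₂, δ₂⟩ := S₂
  obtain ⟨hΓ₁, hσ₁, hδ₁⟩ := h₁
  obtain ⟨hΓ₂, hσ₂, hδ₂⟩ := h₂
  obtain rfl : nlab₁ = nlab₂ := Finset.coe_injective (hΓ₁.trans hΓ₂.symm)
  obtain rfl : elabs₁ = elabs₂ := Finset.coe_injective (hσ₁.trans hσ₂.symm)
  subst hΓ₁ hσ₁
  congr
  funext A R B
  by_cases hABR : A ∈ nlab₁ ∧ R.base ∈ elabs₁ ∧ B ∈ nlab₁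
  · have hmem {st : L0Stmt N E} : st ∈ schemaL0 ⟨nlab₁, elabs₁, δ₁⟩ ↔
        st ∈ schemaL0 ⟨nlab₁, elabs₁, δ₂⟩ := by rw [h]
    refine Card.eq_of_iff ?_ ?_ ?_
    · simpa [exis_mem_schemaL0, hABR] using @hmem (L0Stmt.exis A R B)
    · simpa [le1_mem_schemaL0, hABR] using @hmem (L0Stmt.le1 A R B)
    · simpa [nex_mem_schemaL0, hABR] using @hmem (L0Stmt.nex A R B)
  · exact (hδ₁ A R B hABR).trans (hδ₂ A R B hABR).symm

open Classical in
noncomputable def schemaOfL0 (Γ₀ : Finset N) (σ₀ : Finset E) (𝒯 : Set (L0Stmt N E)) :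
    Schema N E where
  nlab := Γ₀
  elabs := σ₀
  delta A R B :=
    if A ∈ Γ₀ ∧ R.base ∈ σ₀ ∧ B ∈ Γ₀ then
      Card.ofL0 (L0Stmt.exis A R B ∈ 𝒯) (L0Stmt.nex A R B ∈ 𝒯) (L0Stmt.le1 A R B ∈ 𝒯)
    else Card.star

lemma schemaOfL0_over (Γ₀ : Finset N) (σ₀ : Finset E) (𝒯 : Set (L0Stmt N E)) :
    (schemaOfL0 Γ₀ σ₀ 𝒯).Over Γ₀ σ₀ :=
  ⟨rfl, rfl, fun _ _ _ h => if_neg h⟩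

theorem Coherent.schemaL0_schemaOfL0 {Γ₀ : Finset N} {σ₀ : Finset E} {𝒯 : Set (L0Stmt N E)}
    (hcoh : Coherent 𝒯) (hover : ∀ st ∈ 𝒯, st.Over Γ₀ σ₀) :
    schemaL0 (schemaOfL0 Γ₀ σ₀ 𝒯) = 𝒯 := by
  have hδ (A : N) (R : SRole E) (B : N) (h : A ∈ Γ₀ ∧ R.base ∈ σ₀ ∧ B ∈ Γ₀) :
      (schemaOfL0 Γ₀ σ₀ 𝒯).delta A R B =
        Card.ofL0 (L0Stmt.exis A R B ∈ 𝒯) (L0Stmt.nex A R B ∈ 𝒯) (L0Stmt.le1 A R B ∈ 𝒯) :=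
    if_pos h
  have spec (A : N) (R : SRole E) (B : N) := Card.ofL0_spec (hcoh.1 A R B) (hcoh.2 A R B)
  ext st
  cases st with
  | exis A R B =>
    rw [exis_mem_schemaL0]
    exact ⟨fun ⟨h, hd⟩ => (spec A R B).1.1 (hδ A R B h ▸ hd),
      fun hst => ⟨hover _ hst, hδ A R B (hover _ hst) ▸ (spec A R B).1.2 hst⟩⟩
  | nex A R B =>
    rw [nex_mem_schemaL0]
    exact ⟨fun ⟨h, hd⟩ => (spec A R B).2.2.1 (hδ A R B h ▸ hd),
      fun hst => ⟨hover _ hst, hδ A R B (hover _ hst) ▸ (spec A R B).2.2.2 hst⟩⟩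
  | le1 A R B =>
    rw [le1_mem_schemaL0]
    exact ⟨fun ⟨h, hd⟩ => (spec A R B).2.1.1 (hδ A R B h ▸ hd),
      fun hst => ⟨hover _ hst, hδ A R B (hover _ hst) ▸ (spec A R B).2.1.2 hst⟩⟩

theorem Coherent.existsUnique_schemaL0_eq {Γ₀ : Set N} {σ₀ : Set E} (hΓ : Γ₀.Finite)
    (hσ : σ₀.Finite) {𝒯 : Set (L0Stmt N E)} (hcoh : Coherent 𝒯)
    (hover : ∀ st ∈ 𝒯, st.Over Γ₀ σ₀) :
    ∃! S : Schema N E, S.Over Γ₀ σ₀ ∧ schemaL0 S = 𝒯 := by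
  lift Γ₀ to Finset N using hΓ
  lift σ₀ to Finset E using hσ
  refine ⟨schemaOfL0 Γ₀ σ₀ 𝒯, ⟨schemaOfL0_over Γ₀ σ₀ 𝒯, hcoh.schemaL0_schemaOfL0 hover⟩, ?_⟩
  rintro S ⟨hS, hS𝒯⟩
  exact Schema.eq_of_schemaL0_eq hS (schemaOfL0_over Γ₀ σ₀ 𝒯)
    (hS𝒯.trans (hcoh.schemaL0_schemaOfL0 hover).symm)

lemma L0Sat_nex_iff {G : Graph N E} {A B : N} {R : SRole E} :
    L0Sat G (L0Stmt.nex A R B) ↔ ∀ u ∈ G.nodeLab A, G.succ R B u = ∅ := by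
  simp only [L0Sat, ← Set.not_nonempty_iff_eq_empty]
  rfl

lemma Graph.succ_finite {G : Graph N E} (hG : G.dom.Finite) (R : SRole E) (B : N) (u : ℕ) :
    (G.succ R B u).Finite :=
  hG.subset fun _ hv => G.nodeLab_sub B hv.2

theorem cardOk_iff_L0Sat {G : Graph N E} (hG : G.dom.Finite) {S : Schema N E} :
    (∀ A ∈ S.nlab, ∀ B ∈ S.nlab, ∀ R : SRole E, R.base ∈ S.elabs →
      ∀ u ∈ G.nodeLab A, (S.delta A R B).ok (G.succ R B u)) ↔
    ∀ st ∈ schemaL0 S, L0Sat G st := by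
  constructor
  · intro h st hst
    cases st with
    | exis A R B =>
      obtain ⟨⟨hA, hR, hB⟩, hd⟩ := exis_mem_schemaL0.1 hst
      exact fun u hu => ((Card.ok_iff (G.succ_finite hG R B u)).1 (h A hA B hB R hR u hu)).1 hd
    | nex A R B =>
      obtain ⟨⟨hA, hR, hB⟩, hd⟩ := nex_mem_schemaL0.1 hst
      exact L0Sat_nex_iff.2 fun u hu =>
        ((Card.ok_iff (G.succ_finite hG R B u)).1 (h A hA B hB R hR u hu)).2.2 hd
    | le1 A R B =>
      obtain ⟨⟨hA, hR, hB⟩, hd⟩ := le1_mem_schemaL0.1 hst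
      exact fun u hu => ((Card.ok_iff (G.succ_finite hG R B u)).1 (h A hA B hB R hR u hu)).2.1 hd
  · intro h A hA B hB R hR u hu
    rw [Card.ok_iff (G.succ_finite hG R B u)]
    exact ⟨fun hd => h _ (exis_mem_schemaL0.2 ⟨⟨hA, hR, hB⟩, hd⟩) u hu,
      fun hd => h _ (le1_mem_schemaL0.2 ⟨⟨hA, hR, hB⟩, hd⟩) u hu,
      fun hd => L0Sat_nex_iff.1 (h _ (nex_mem_schemaL0.2 ⟨⟨hA, hR, hB⟩, hd⟩)) u hu⟩

theorem mem_L_iff {G : Graph N E} {S : Schema N E} :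
    G ∈ L S ↔ G.Finite ∧ (∀ u ∈ G.dom, ∃! A, u ∈ G.nodeLab A) ∧
      (∀ A, (G.nodeLab A).Nonempty → A ∈ S.nlab) ∧
      (∀ r, (G.edgeRel r).Nonempty → r ∈ S.elabs) ∧
      ∀ st ∈ schemaL0 S, L0Sat G st := by
  constructor
  · rintro ⟨hfin, hlab, hnlab, helabs, hδ⟩
    exact ⟨hfin, hlab, hnlab, helabs, (cardOk_iff_L0Sat hfin.1).1 hδ⟩
  · rintro ⟨hfin, hlab, hnlab, helabs, hsat⟩
    exact ⟨hfin, hlab, hnlab, helabs, (cardOk_iff_L0Sat hfin.1).2 hsat⟩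

theorem L_subset_L_of_schemaL0_subset {S₁ S₂ : Schema N E} (hnlab : S₁.nlab = S₂.nlab)
    (helabs : S₁.elabs = S₂.elabs) (h : schemaL0 S₂ ⊆ schemaL0 S₁) : L S₁ ⊆ L S₂ := by
  intro G hG
  rw [mem_L_iff] at hG ⊢
  rw [← hnlab, ← helabs]
  obtain ⟨hfin, hlab, hnlab, helabs, hsat⟩ := hG
  exact ⟨hfin, hlab, hnlab, helabs, fun st hst => hsat st (h hst)⟩

lemma C2RPQ.answers_finite {V : Type} [Finite V] (q : C2RPQ N E V) {G : Graph N E}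
    (hG : G.dom.Finite) : (q.answers G).Finite :=
  (Set.Finite.pi fun _ => hG).subset fun _ ht i _ => ht.1 i

namespace Transformation

variable {F : Constructors N} (T : Transformation N E F)

lemma nlabels_finite : T.nlabels.Finite := by
  refine ((T.nodeRules.finite_toSet.image NodeRule.head).union
    ((T.edgeRules.finite_toSet.image EdgeRule.src).union
      (T.edgeRules.finite_toSet.image EdgeRule.tgt))).subset ?_
  rintro A (⟨ρ, hρ, rfl⟩ | ⟨ρ, hρ, rfl | rfl⟩)
  · exact Or.inl ⟨ρ, hρ, rfl⟩
  · exact Or.inr (Or.inl ⟨ρ, hρ, rfl⟩)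
  · exact Or.inr (Or.inr ⟨ρ, hρ, rfl⟩)

lemma elabels_finite : T.elabels.Finite :=
  (T.edgeRules.finite_toSet.image EdgeRule.lab).subset fun _ ⟨ρ, hρ, h⟩ => ⟨ρ, hρ, h⟩

lemma apply_finite {G : Graph N E} (hG : G.Finite) : (T.apply G).Finite := by
  refine ⟨?_, (T.nodeRules.finite_toSet.image NodeRule.head).subset ?_,
    (T.edgeRules.finite_toSet.image EdgeRule.lab).subset ?_⟩
  · have hnode := T.nodeRules.finite_toSet.biUnion fun ρ _ =>
      (ρ.body.answers_finite hG.1).image (F.f ρ.head)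
    have hedge := T.edgeRules.finite_toSet.biUnion fun ρ _ =>
      ((ρ.body.answers_finite hG.1).image fun t => F.f ρ.src fun i => t (Sum.inl i)).union
        ((ρ.body.answers_finite hG.1).image fun t => F.f ρ.tgt fun i => t (Sum.inr i))
    refine (hnode.union hedge).subset ?_
    rintro u (⟨ρ, hρ, t, ht, rfl⟩ | ⟨ρ, hρ, t, ht, rfl | rfl⟩)
    · exact Or.inl (Set.mem_biUnion hρ ⟨t, ht, rfl⟩)
    · exact Or.inr (Set.mem_biUnion hρ (Or.inl ⟨t, ht, rfl⟩))
    · exact Or.inr (Set.mem_biUnion hρ (Or.inr ⟨t, ht, rfl⟩))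
  · intro A hA
    obtain ⟨u, ρ, hρ, hhead, -⟩ := Set.nonempty_iff_ne_empty.2 hA
    exact ⟨ρ, hρ, hhead⟩
  · intro r hr
    obtain ⟨p, ρ, hρ, hlab, -⟩ := Set.nonempty_iff_ne_empty.2 hr
    exact ⟨ρ, hρ, hlab⟩

lemma eq_of_mem_apply_nodeLab (G : Graph N E) {u : ℕ} {A B : N}
    (hA : u ∈ (T.apply G).nodeLab A) (hB : u ∈ (T.apply G).nodeLab B) : A = B := by
  obtain ⟨ρ, -, rfl, t, -, rfl⟩ := hA
  obtain ⟨ρ', -, rfl, t', -, he⟩ := hB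
  by_contra hne
  exact F.disj _ _ hne t t' he

variable {T} {S : Schema N E}

lemma Trimmed.nodeLab_nonempty (htrim : T.Trimmed S) {A : N} (hA : A ∈ T.nlabels) :
    ∃ G ∈ L S, ((T.apply G).nodeLab A).Nonempty := by
  obtain ⟨ρ, hρ, rfl⟩ := htrim.2.2.1 A hA
  obtain ⟨G, hG, t, ht⟩ := htrim.1 ρ hρ
  exact ⟨G, hG, F.f ρ.head t, ρ, hρ, rfl, t, ht, rfl⟩

theorem Trimmed.coherent_elicited (htrim : T.Trimmed S) : Coherent (elicited T S) := by
  refine ⟨fun A R B ⟨hex, hnex⟩ => ?_, fun A R B hnex => ⟨hnex.1, fun G hG u hu => ?_⟩⟩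
  · obtain ⟨G, hG, u, hu⟩ := htrim.nodeLab_nonempty hex.1.1
    exact hnex.2 G hG u hu (hex.2 G hG u hu)
  · exact fun v hv _ _ => absurd ⟨v, hv⟩ (hnex.2 G hG u hu)

lemma apply_mem_L (htop : TopCovered T S) {S' : Schema N E}
    (hS' : S'.Over T.nlabels T.elabels) (hS'L0 : schemaL0 S' = elicited T S) {G : Graph N E}
    (hG : G ∈ L S) : T.apply G ∈ L S' := by
  refine mem_L_iff.2 ⟨T.apply_finite hG.1, fun u hu => ?_, ?_, ?_, ?_⟩
  · obtain ⟨A, -, hA⟩ := htop G hG u hu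
    exact ⟨A, hA, fun B hB => T.eq_of_mem_apply_nodeLab G hB hA⟩
  · rintro A ⟨u, ρ, hρ, rfl, -⟩
    rw [← Finset.mem_coe, hS'.1]
    exact Or.inl ⟨ρ, hρ, rfl⟩
  · rintro r ⟨p, ρ, hρ, rfl, -⟩
    rw [← Finset.mem_coe, hS'.2.1]
    exact ⟨ρ, hρ, rfl⟩
  · intro st hst
    exact (hS'L0 ▸ hst : st ∈ elicited T S).2 G hG

lemma schemaL0_subset_elicited {S' : Schema N E} (hS' : S'.Over T.nlabels T.elabels)
    (happly : ∀ G ∈ L S, T.apply G ∈ L S') : schemaL0 S' ⊆ elicited T S := by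
  intro st hst
  refine ⟨?_, fun G hG => (mem_L_iff.1 (happly G hG)).2.2.2.2 st hst⟩
  rw [← hS'.1, ← hS'.2.1]
  exact L0Stmt.over_of_mem_schemaL0 hst

end Transformation

/-- Target schema elicitation. For `T` trimmed modulo `S` with
`(T,S) ⊨ ⊤ ⊑ ⊔Γ_T`, the set `𝒯` of all L0 statements over `Γ_T`, `Σ_T`
satisfied by all outputs is coherent, corresponds to a unique schema `S'` over
`Γ_T`, `Σ_T`, and that `S'` is the containment-minimal target schema. -/
theorem schema_elicitation {N E : Type} {F : Constructors N}
    (S : Schema N E) (T : Transformation N E F)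
    (htrim : T.Trimmed S) (htop : TopCovered T S) :
    Coherent (elicited T S) ∧
    (∃! S' : Schema N E, S'.Over T.nlabels T.elabels ∧ schemaL0 S' = elicited T S) ∧
    ∀ S' : Schema N E, S'.Over T.nlabels T.elabels → schemaL0 S' = elicited T S →
      ((∀ G ∈ L S, T.apply G ∈ L S') ∧
       ∀ S'' : Schema N E, S''.Over T.nlabels T.elabels →
         (∀ G ∈ L S, T.apply G ∈ L S'') → L S' ⊆ L S'') := by
  have hcoh : Coherent (elicited T S) := htrim.coherent_elicited
  refine ⟨hcoh, hcoh.existsUnique_schemaL0_eq T.nlabels_finite T.elabels_finite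
    fun st hst => hst.1, fun S' hS' hS'L0 => ⟨fun G hG => T.apply_mem_L htop hS' hS'L0 hG, ?_⟩⟩
  intro S'' hS'' happly
  refine L_subset_L_of_schemaL0_subset (Finset.coe_injective (hS'.1.trans hS''.1.symm))
    (Finset.coe_injective (hS'.2.1.trans hS''.2.1.symm)) ?_
  exact hS'L0 ▸ T.schemaL0_subset_elicited hS'' happly

end GDB
end

section
/- Let S be a schema and T₁, T₂ two graph transformations that are both trimmed modulo S. Then T₁ ≡_S T₂ (i.e., T₁(G) = T₂(G) for every G ∈ L(S)) if and only if: (1) Γ_{T₁} = Γ_{T₂} and Σ_{T₁} = Σ_{T₂}; (2) Q_A^{T₁}(x̄) ≡_S Q_A^{T₂}(x̄) for every A ∈ Γ_{T₁}; and (3) Q_{A,r,B}^{T₁}(x̄,ȳ) ≡_S Q_{A,r,B}^{T₂}(x̄,ȳ) for all A, B ∈ Γ_{T₁} and r ∈ Σ_{T₁}, where P ≡_S Q means P ⊆_S Q and Q ⊆_S P. -/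
namespace GDB

variable {N E : Type}

/-! Since node constructors are injective with disjoint ranges, `T(G)` records exactly the
answers of the queries `Q_A^T` and `Q_{A,r,B}^T` on `G` (its domain consists of the labelled
nodes and the endpoints of edges), so `T₁(G) = T₂(G)` iff all these answer sets agree.
For a trimmed `T`, every head label is witnessed by an answer on some `G ∈ L(S)`, so the
answer sets also determine `Γ_T` and `Σ_T`; outside these labels the queries are empty. -/

@[ext]
theorem Graph.ext {G₁ G₂ : Graph N E} (hdom : G₁.dom = G₂.dom)
    (hnode : G₁.nodeLab = G₂.nodeLab) (hedge : G₁.edgeRel = G₂.edgeRel) : G₁ = G₂ := by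
  cases G₁; cases G₂; simp_all

section

variable {F : Constructors N} {T : Transformation N E F} {G : Graph N E}

theorem mem_QABans_of_mem_answers {ρ : EdgeRule N E F} (hρ : ρ ∈ T.edgeRules)
    {t : Fin (F.arity ρ.src) ⊕ Fin (F.arity ρ.tgt) → ℕ} (ht : t ∈ ρ.body.answers G) :
    (fun i => t (Sum.inl i), fun i => t (Sum.inr i)) ∈
      QABans T ρ.src (SRole.fwd ρ.lab) ρ.tgt G := by
  refine ⟨ρ, hρ, rfl, rfl, rfl, ?_⟩
  convert ht using 1
  funext x
  cases x <;> rfl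

theorem Transformation.mem_apply_nodeLab_iff {A : N} {u : ℕ} :
    u ∈ (T.apply G).nodeLab A ↔ ∃ t ∈ QAans T A G, u = F.f A t := by
  constructor
  · rintro ⟨ρ, hρ, rfl, t, ht, rfl⟩
    exact ⟨t, ⟨ρ, hρ, rfl, ht⟩, rfl⟩
  · rintro ⟨t, ⟨ρ, hρ, rfl, ht⟩, rfl⟩
    exact ⟨ρ, hρ, rfl, t, ht, rfl⟩

theorem Transformation.mem_apply_edgeRel_iff {r : E} {u v : ℕ} :
    (u, v) ∈ (T.apply G).edgeRel r ↔
      ∃ A B, ∃ ts ∈ QABans T A (SRole.fwd r) B G, u = F.f A ts.1 ∧ v = F.f B ts.2 := by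
  constructor
  · rintro ⟨ρ, hρ, rfl, t, ht, hu, hv⟩
    exact ⟨ρ.src, ρ.tgt, _, mem_QABans_of_mem_answers hρ ht, hu, hv⟩
  · rintro ⟨A, B, ts, ⟨ρ, hρ, rfl, rfl, rfl, ht⟩, hu, hv⟩
    exact ⟨ρ, hρ, rfl, Sum.elim ts.1 ts.2, ht, hu, hv⟩

theorem Transformation.f_mem_apply_nodeLab_iff {A : N} {t : Fin (F.arity A) → ℕ} :
    F.f A t ∈ (T.apply G).nodeLab A ↔ t ∈ QAans T A G := by
  rw [mem_apply_nodeLab_iff]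
  constructor
  · rintro ⟨t', ht', heq⟩
    rwa [F.inj A heq]
  · exact fun ht => ⟨t, ht, rfl⟩

theorem Transformation.f_mem_apply_edgeRel_iff {A B : N} {r : E}
    {ts : (Fin (F.arity A) → ℕ) × (Fin (F.arity B) → ℕ)} :
    (F.f A ts.1, F.f B ts.2) ∈ (T.apply G).edgeRel r ↔ ts ∈ QABans T A (SRole.fwd r) B G := by
  rw [mem_apply_edgeRel_iff]
  constructor
  · rintro ⟨A', B', ts', hts', hu, hv⟩
    obtain rfl : A' = A := by_contra fun hne => F.disj A' A hne ts'.1 ts.1 hu.symm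
    obtain rfl : B' = B := by_contra fun hne => F.disj B' B hne ts'.2 ts.2 hv.symm
    rwa [Prod.ext (F.inj A' hu) (F.inj B' hv)]
  · exact fun hts => ⟨A, B, ts, hts, rfl, rfl⟩

theorem Transformation.apply_dom_eq :
    (T.apply G).dom = {u | (∃ A, u ∈ (T.apply G).nodeLab A) ∨
      ∃ r v, (u, v) ∈ (T.apply G).edgeRel r ∨ (v, u) ∈ (T.apply G).edgeRel r} := by
  ext u
  constructor
  · rintro (⟨ρ, hρ, t, ht, rfl⟩ | ⟨ρ, hρ, t, ht, rfl | rfl⟩)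
    · exact Or.inl ⟨ρ.head, ρ, hρ, rfl, t, ht, rfl⟩
    · exact Or.inr ⟨ρ.lab, _, Or.inl ⟨ρ, hρ, rfl, t, ht, rfl, rfl⟩⟩
    · exact Or.inr ⟨ρ.lab, _, Or.inr ⟨ρ, hρ, rfl, t, ht, rfl, rfl⟩⟩
  · rintro (⟨A, ρ, hρ, -, t, ht, rfl⟩ |
      ⟨r, v, ⟨ρ, hρ, -, t, ht, hu, -⟩ | ⟨ρ, hρ, -, t, ht, -, hu⟩⟩)
    · exact Or.inl ⟨ρ, hρ, t, ht, rfl⟩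
    · exact Or.inr ⟨ρ, hρ, t, ht, Or.inl hu⟩
    · exact Or.inr ⟨ρ, hρ, t, ht, Or.inr hu⟩

theorem Transformation.apply_eq_apply_iff {T₁ T₂ : Transformation N E F} :
    T₁.apply G = T₂.apply G ↔
      (∀ A, QAans T₁ A G = QAans T₂ A G) ∧
      ∀ A r B, QABans T₁ A (SRole.fwd r) B G = QABans T₂ A (SRole.fwd r) B G := by
  constructor
  · intro h
    refine ⟨fun A => ?_, fun A r B => ?_⟩
    · ext t
      rw [← f_mem_apply_nodeLab_iff, h, f_mem_apply_nodeLab_iff]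
    · ext ts
      rw [← f_mem_apply_edgeRel_iff, h, f_mem_apply_edgeRel_iff]
  · rintro ⟨hQA, hQAB⟩
    have hnode : (T₁.apply G).nodeLab = (T₂.apply G).nodeLab := by
      funext A
      ext u
      simp only [mem_apply_nodeLab_iff, hQA]
    have hedge : (T₁.apply G).edgeRel = (T₂.apply G).edgeRel := by
      funext r
      ext ⟨u, v⟩
      simp only [mem_apply_edgeRel_iff, hQAB]
    ext1
    · rw [apply_dom_eq, apply_dom_eq, hnode, hedge]
    · exact hnode
    · exact hedge

theorem mem_nlabels_of_mem_QAans {A : N} {t : Fin (F.arity A) → ℕ} (ht : t ∈ QAans T A G) :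
    A ∈ T.nlabels := by
  obtain ⟨ρ, hρ, h, -⟩ := ht
  exact Or.inl ⟨ρ, hρ, h⟩

theorem mem_labels_of_mem_QABans {A B : N} {r : E}
    {ts : (Fin (F.arity A) → ℕ) × (Fin (F.arity B) → ℕ)}
    (hts : ts ∈ QABans T A (SRole.fwd r) B G) :
    A ∈ T.nlabels ∧ B ∈ T.nlabels ∧ r ∈ T.elabels := by
  obtain ⟨ρ, hρ, hl, h1, h2, -⟩ := hts
  exact ⟨Or.inr ⟨ρ, hρ, Or.inl h1⟩, Or.inr ⟨ρ, hρ, Or.inr h2⟩, ⟨ρ, hρ, hl⟩⟩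

theorem QAans_eq_empty {A : N} (hA : A ∉ T.nlabels) : QAans T A G = ∅ :=
  Set.eq_empty_of_forall_notMem fun _ ht => hA (mem_nlabels_of_mem_QAans ht)

theorem QABans_eq_empty {A B : N} {r : E}
    (h : ¬(A ∈ T.nlabels ∧ B ∈ T.nlabels ∧ r ∈ T.elabels)) :
    QABans T A (SRole.fwd r) B G = ∅ :=
  Set.eq_empty_of_forall_notMem fun _ hts => h (mem_labels_of_mem_QABans hts)

variable {S : Schema N E}

theorem Transformation.Trimmed.exists_QAans_nonempty (hT : T.Trimmed S)
    {A : N} (hA : A ∈ T.nlabels) :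
    ∃ G ∈ L S, (QAans T A G).Nonempty := by
  obtain ⟨ρ, hρ, rfl⟩ := hT.2.2.1 A hA
  obtain ⟨G, hG, t, ht⟩ := hT.1 ρ hρ
  exact ⟨G, hG, t, ρ, hρ, rfl, ht⟩

theorem Transformation.Trimmed.exists_QABans_nonempty (hT : T.Trimmed S)
    {r : E} (hr : r ∈ T.elabels) :
    ∃ G ∈ L S, ∃ A B, (QABans T A (SRole.fwd r) B G).Nonempty := by
  obtain ⟨ρ, hρ, rfl⟩ := hT.2.2.2 r hr
  obtain ⟨G, hG, t, ht⟩ := hT.2.1 ρ hρ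
  exact ⟨G, hG, ρ.src, ρ.tgt, _, mem_QABans_of_mem_answers hρ ht⟩

theorem Transformation.Trimmed.nlabels_subset {T₁ T₂ : Transformation N E F}
    (h₁ : T₁.Trimmed S) (hQA : ∀ A, ∀ G ∈ L S, QAans T₁ A G ⊆ QAans T₂ A G) :
    T₁.nlabels ⊆ T₂.nlabels := by
  intro A hA
  obtain ⟨G, hG, t, ht⟩ := h₁.exists_QAans_nonempty hA
  exact mem_nlabels_of_mem_QAans (hQA A G hG ht)

theorem Transformation.Trimmed.elabels_subset {T₁ T₂ : Transformation N E F}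
    (h₁ : T₁.Trimmed S) (hQAB : ∀ A r B, ∀ G ∈ L S,
      QABans T₁ A (SRole.fwd r) B G ⊆ QABans T₂ A (SRole.fwd r) B G) :
    T₁.elabels ⊆ T₂.elabels := by
  intro r hr
  obtain ⟨G, hG, A, B, ts, hts⟩ := h₁.exists_QABans_nonempty hr
  exact (mem_labels_of_mem_QABans (hQAB A r B G hG hts)).2.2

end

/-- Equivalence of trimmed transformations. `T₁ ≡_S T₂` iff the
head label sets coincide and the queries `Q_A` and `Q_{A,r,B}` of both
transformations are equivalent modulo `S`. -/
theorem equivalence_iff {N E : Type} {F : Constructors N}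
    (S : Schema N E) (T₁ T₂ : Transformation N E F)
    (h₁ : T₁.Trimmed S) (h₂ : T₂.Trimmed S) :
    (∀ G ∈ L S, T₁.apply G = T₂.apply G) ↔
      (T₁.nlabels = T₂.nlabels ∧ T₁.elabels = T₂.elabels ∧
       (∀ A ∈ T₁.nlabels, ∀ G ∈ L S, QAans T₁ A G = QAans T₂ A G) ∧
       (∀ A ∈ T₁.nlabels, ∀ B ∈ T₁.nlabels, ∀ r ∈ T₁.elabels, ∀ G ∈ L S,
          QABans T₁ A (SRole.fwd r) B G = QABans T₂ A (SRole.fwd r) B G)) := by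
  constructor
  · intro h
    have hQA : ∀ A, ∀ G ∈ L S, QAans T₁ A G = QAans T₂ A G :=
      fun A G hG => (Transformation.apply_eq_apply_iff.1 (h G hG)).1 A
    have hQAB : ∀ A r B, ∀ G ∈ L S,
        QABans T₁ A (SRole.fwd r) B G = QABans T₂ A (SRole.fwd r) B G :=
      fun A r B G hG => (Transformation.apply_eq_apply_iff.1 (h G hG)).2 A r B
    refine ⟨(h₁.nlabels_subset fun A G hG => (hQA A G hG).le).antisymm
        (h₂.nlabels_subset fun A G hG => (hQA A G hG).ge),
      (h₁.elabels_subset fun A r B G hG => (hQAB A r B G hG).le).antisymm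
        (h₂.elabels_subset fun A r B G hG => (hQAB A r B G hG).ge),
      fun A _ G hG => hQA A G hG, fun A _ B _ r _ G hG => hQAB A r B G hG⟩
  · rintro ⟨hn, he, hQA, hQAB⟩ G hG
    refine Transformation.apply_eq_apply_iff.2 ⟨fun A => ?_, fun A r B => ?_⟩
    · by_cases hA : A ∈ T₁.nlabels
      · exact hQA A hA G hG
      · rw [QAans_eq_empty hA, QAans_eq_empty (hn ▸ hA)]
    · by_cases hlab : A ∈ T₁.nlabels ∧ B ∈ T₁.nlabels ∧ r ∈ T₁.elabels
      · exact hQAB A hlab.1 B hlab.2.1 r hlab.2.2 G hG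
      · rw [QABans_eq_empty hlab, QABans_eq_empty (hn ▸ he ▸ hlab)]

end GDB
end

section
/- Let S be a schema and 𝒯 an S-driven Horn-ALCIF TBox. Then there exists a Horn-ALCIF TBox 𝒯' with exactly the same (finite or infinite) models as 𝒯 such that all at-most constraints in 𝒯' are of the form A ⊑ ∃≤1 R.A' with A, A' ∈ Γ_S single concept names and R ∈ Σ_S±; in particular 𝒯' contains at most |Σ_S±|·|Γ_S|² at-most constraints. -/
namespace GDB

variable {N E : Type}

/-! At-most constraints `K ⊑ ∃≤1 R.K'` whose triple `(K, R, K')` is satisfiable modulo `𝒯` are,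
by S-drivenness, consequences of constraints `A ⊑ ∃≤1 R.A'` of `𝒯` with `A ∈ K`, `A' ∈ K'` and
`A, A' ∈ Γ_S`, which are kept. Every other at-most constraint is replaced by `K ⊑ ∄R.K'`: this
holds in every model of `𝒯` because the triple is unsatisfiable, and it implies `K ⊑ ∃≤1 R.K'`.
The at-most constraints left are indexed by `Γ_S × Σ_S± × Γ_S`. -/

def HornCI.IsAtMost (ci : HornCI N E) : Prop :=
  ∃ K R K', ci = HornCI.le1 K R K'

theorem conjSat_of_subset {G : Graph N E} {K₀ K : List N} {u : ℕ} (hK : K₀ ⊆ K)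
    (hu : conjSat G K u) : conjSat G K₀ u :=
  ⟨hu.1, fun A hA => hu.2 A (hK hA)⟩

namespace HornCI

variable {G : Graph N E} {K₀ K K₀' K' : List N} {R : SRole E}

theorem sat_le1_of_subset (hK : K₀ ⊆ K) (hK' : K₀' ⊆ K') (h : (le1 K₀ R K₀').Sat G) :
    (le1 K R K').Sat G :=
  fun u hu => (h u (conjSat_of_subset hK hu)).anti
    fun _ hv => ⟨hv.1, conjSat_of_subset hK' hv.2⟩

theorem sat_le1_of_sat_nex (h : (nex K R K').Sat G) : (le1 K R K').Sat G :=
  fun u hu v hv _ _ => absurd ⟨v, hv⟩ (h u hu)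

theorem sat_nex_of_not_tripleSat {T : Set (HornCI N E)} (hG : HornModels G T)
    (h : ¬ TripleSat T K R K') : (nex K R K').Sat G :=
  fun u hu ⟨v, huv, hv⟩ => h ⟨G, hG, u, v, hu, huv, hv⟩

end HornCI

theorem SRole.setOf_base_mem_finite_and_ncard_le (σ : Finset E) :
    {R : SRole E | R.base ∈ σ}.Finite ∧ {R : SRole E | R.base ∈ σ}.ncard ≤ 2 * σ.card := by
  have hsplit : {R : SRole E | R.base ∈ σ} = SRole.fwd '' ↑σ ∪ SRole.bwd '' ↑σ := by
    ext (r | r) <;> simp [SRole.base]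
  have himage (f : E → SRole E) : (f '' ↑σ).ncard ≤ σ.card :=
    (Set.ncard_image_le σ.finite_toSet).trans_eq (Set.ncard_coe_finset σ)
  rw [hsplit]
  refine ⟨(σ.finite_toSet.image _).union (σ.finite_toSet.image _), ?_⟩
  linarith [Set.ncard_union_le (SRole.fwd '' (σ : Set E)) (SRole.bwd '' (σ : Set E)),
    himage SRole.fwd, himage SRole.bwd]

theorem atMost_finite_and_ncard_le {T : Set (HornCI N E)} (Γ : Finset N) (σ : Finset E)
    (h : ∀ K R K', HornCI.le1 K R K' ∈ T →
      ∃ A ∈ Γ, ∃ A' ∈ Γ, K = [A] ∧ K' = [A'] ∧ SRole.base R ∈ σ) :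
    {ci ∈ T | ci.IsAtMost}.Finite ∧ {ci ∈ T | ci.IsAtMost}.ncard ≤ 2 * σ.card * Γ.card ^ 2 := by
  set P := (Γ : Set N) ×ˢ {R : SRole E | R.base ∈ σ} ×ˢ (Γ : Set N)
  obtain ⟨hσfin, hσcard⟩ := SRole.setOf_base_mem_finite_and_ncard_le σ
  have hsub : {ci ∈ T | ci.IsAtMost} ⊆ (fun p => HornCI.le1 [p.1] p.2.1 [p.2.2]) '' P := by
    rintro _ ⟨hci, K, R, K', rfl⟩
    obtain ⟨A, hA, A', hA', rfl, rfl, hR⟩ := h K R K' hci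
    exact ⟨(A, R, A'), ⟨hA, hR, hA'⟩, rfl⟩
  have hPfin : P.Finite := Γ.finite_toSet.prod (hσfin.prod Γ.finite_toSet)
  have hPcard : P.ncard ≤ 2 * σ.card * Γ.card ^ 2 := by
    simp only [P, Set.ncard_prod, Set.ncard_coe_finset]
    calc Γ.card * ({R : SRole E | R.base ∈ σ}.ncard * Γ.card)
        ≤ Γ.card * (2 * σ.card * Γ.card) := by gcongr
      _ = 2 * σ.card * Γ.card ^ 2 := by ring
  refine ⟨(hPfin.image _).subset hsub, ?_⟩
  calc {ci ∈ T | ci.IsAtMost}.ncard ≤ (_ '' P).ncard := Set.ncard_le_ncard hsub (hPfin.image _)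
    _ ≤ P.ncard := Set.ncard_image_le hPfin
    _ ≤ 2 * σ.card * Γ.card ^ 2 := hPcard

def simplifyAtMost (S : Schema N E) (T : Set (HornCI N E)) : Set (HornCI N E) :=
  {ci ∈ T | ¬ ci.IsAtMost} ∪
  {ci ∈ T | ∃ A ∈ S.nlab, ∃ R, ∃ A' ∈ S.nlab, ci = HornCI.le1 [A] R [A']} ∪
  {ci | ∃ K R K', HornCI.le1 K R K' ∈ T ∧ ¬ TripleSat T K R K' ∧ ci = HornCI.nex K R K'}

section simplifyAtMost

variable {S : Schema N E} {T : Set (HornCI N E)} {G : Graph N E}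

theorem models_simplifyAtMost (hG : HornModels G T) : HornModels G (simplifyAtMost S T) := by
  rintro ci ((⟨hci, -⟩ | ⟨hci, -⟩) | ⟨K, R, K', -, hunsat, rfl⟩)
  · exact hG ci hci
  · exact hG ci hci
  · exact HornCI.sat_nex_of_not_tripleSat hG hunsat

theorem models_of_models_simplifyAtMost (hsd : SDriven S T)
    (hG : HornModels G (simplifyAtMost S T)) : HornModels G T := by
  intro ci hci
  by_cases hat : ci.IsAtMost
  · obtain ⟨K, R, K', rfl⟩ := hat
    by_cases hsat : TripleSat T K R K'
    · obtain ⟨A, hA, A', hA', hAK, hA'K', hmem⟩ := hsd.2 K R K' hci hsat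
      have hkept : HornCI.le1 [A] R [A'] ∈ simplifyAtMost S T :=
        Or.inl (Or.inr ⟨hmem, A, hA, R, A', hA', rfl⟩)
      exact HornCI.sat_le1_of_subset (by simpa using hAK) (by simpa using hA'K') (hG _ hkept)
    · exact HornCI.sat_le1_of_sat_nex (hG _ (Or.inr ⟨K, R, K', hci, hsat, rfl⟩))
  · exact hG ci (Or.inl (Or.inl ⟨hci, hat⟩))

theorem le1_mem_simplifyAtMost {K K' : List N} {R : SRole E}
    (h : HornCI.le1 K R K' ∈ simplifyAtMost S T) :
    ∃ A ∈ S.nlab, ∃ A' ∈ S.nlab, K = [A] ∧ K' = [A'] ∧ HornCI.le1 K R K' ∈ T := by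
  rcases h with (⟨-, hat⟩ | ⟨hmem, A, hA, R, A', hA', heq⟩) | ⟨_, _, _, -, -, heq⟩
  · exact absurd ⟨K, R, K', rfl⟩ hat
  · cases heq
    exact ⟨A, hA, A', hA', rfl, rfl, hmem⟩
  · cases heq

end simplifyAtMost

/-- Every S-driven Horn-ALCIF TBox (over the signature of `S`)
can be simplified, preserving all (finite or infinite) models, so that all its
at-most constraints are of the form `A ⊑ ∃≤1 R.A'` with `A, A' ∈ Γ_S` and
`R ∈ Σ_S±`; in particular it has at most `|Σ_S±|·|Γ_S|²` at-most constraints. -/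
theorem simplify_sdriven {N E : Type} (S : Schema N E) (T : Set (HornCI N E))
    (hroles : ∀ ci ∈ T, ∀ R ∈ HornCI.roles ci, SRole.base R ∈ S.elabs)
    (hsd : SDriven S T) :
    ∃ T' : Set (HornCI N E),
      (∀ G : Graph N E, HornModels G T' ↔ HornModels G T) ∧
      (∀ K (R : SRole E) K', HornCI.le1 K R K' ∈ T' →
        ∃ A ∈ S.nlab, ∃ A' ∈ S.nlab, K = [A] ∧ K' = [A'] ∧ SRole.base R ∈ S.elabs) ∧
      {ci ∈ T' | ∃ K, ∃ R : SRole E, ∃ K', ci = HornCI.le1 K R K'}.Finite ∧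
      {ci ∈ T' | ∃ K, ∃ R : SRole E, ∃ K', ci = HornCI.le1 K R K'}.ncard ≤
        (2 * S.elabs.card) * S.nlab.card ^ 2 := by
  have hshape : ∀ K (R : SRole E) K', HornCI.le1 K R K' ∈ simplifyAtMost S T →
      ∃ A ∈ S.nlab, ∃ A' ∈ S.nlab, K = [A] ∧ K' = [A'] ∧ SRole.base R ∈ S.elabs := by
    intro K R K' h
    obtain ⟨A, hA, A', hA', hK, hK', hmem⟩ := le1_mem_simplifyAtMost h
    exact ⟨A, hA, A', hA', hK, hK', hroles _ hmem R rfl⟩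
  exact ⟨simplifyAtMost S T,
    fun _ => ⟨models_of_models_simplifyAtMost hsd, models_simplifyAtMost⟩,
    hshape, atMost_finite_and_ncard_le S.nlab S.elabs hshape⟩

end GDB
end

section
/- Let c ≥ 1 and let G be a finite connected multigraph (parallel edges and loops allowed) that is c-sparse and in which every node has degree at least 2. Then G is a (2c, 3c)-skeleton: G consists of at most 2c distinguished nodes connected by at most 3c simple paths that are pairwise disjoint except possibly at their endpoints, every node of G lying on one of these paths. -/
namespace GDB

variable {N E : Type}

/-!
Let `D` be the set of nodes of degree at least three, or a single node if there is none. The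
degrees sum to `2m ≤ 2n + 2c`, so the excess `∑ (deg u - 2)` is at most `2c`; hence `|D| ≤ 2c`
and at most `6c` darts (directed edges) leave `D`. Every other node has degree two, so a walk
leaving `D` along a dart is forced to continue through the unique other edge at each node; by
connectivity it reaches `D` again, and it traces a simple path. Reversing such a walk gives the
walk of another dart leaving `D`, so these darts come in pairs, and one path per pair gives at
most `3c` paths. They cover every edge, and two of them can only meet in `D`, since a node of
degree two lies on a single walk and its reversal.
-/

lemma exists_transversal_of_involution {α : Type*} {S : Set α} {σ : α → α} (hS : S.Finite)
    (hmaps : Set.MapsTo σ S S) (hinv : ∀ p ∈ S, σ (σ p) = p) (hfix : ∀ p ∈ S, σ p ≠ p) :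
    ∃ T ⊆ S, 2 * T.ncard = S.ncard ∧ ∀ p ∈ S, (p ∈ T ↔ σ p ∉ T) := by
  let : LinearOrder α := WellOrderingRel.isWellOrder.linearOrder
  set T := {p ∈ S | p < σ p}
  have hTS : T ⊆ S := fun p hp => hp.1
  have hiff : ∀ p ∈ S, (p ∈ T ↔ σ p ∉ T) := by
    intro p hp
    simp only [T, Set.mem_ofPred_eq, hinv p hp, hmaps hp, hp, true_and, not_lt]
    exact ⟨le_of_lt, fun h => lt_of_le_of_ne h (hfix p hp).symm⟩
  have hcompl : S \ T = σ '' T := by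
    ext p
    refine ⟨fun ⟨hp, hpT⟩ => ⟨σ p, not_not.1 ((hiff p hp).not.1 hpT), hinv p hp⟩, ?_⟩
    rintro ⟨q, hq, rfl⟩
    exact ⟨hmaps (hTS hq), (hiff q (hTS hq)).1 hq⟩
  have hinj : Set.InjOn σ T := fun p hp q hq h => by
    rw [← hinv p (hTS hp), h, hinv q (hTS hq)]
  refine ⟨T, hTS, ?_, hiff⟩
  have := Set.ncard_sdiff_add_ncard_of_subset hTS hS
  rw [hcompl, hinj.ncard_image] at this
  omega

lemma GPath.edges_mem_range_verts {G : Graph N E} (P : GPath G) (a : Fin P.len) :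
    (P.edges a).2.1 ∈ Set.range P.verts ∧ (P.edges a).2.2 ∈ Set.range P.verts := by
  rcases P.conn a with h | h <;> rw [h] <;> exact ⟨⟨_, rfl⟩, ⟨_, rfl⟩⟩

lemma isSkeleton_of_finite {G : Graph N E} {ι : Type*} [Finite ι] {D : Set ℕ} (P : ι → GPath G)
    {k l : ℕ} (hDdom : D ⊆ G.dom) (hDfin : D.Finite) (hk : D.ncard ≤ k) (hl : Nat.card ι ≤ l)
    (hsimple : ∀ i, (P i).Simple)
    (hends : ∀ i, (P i).verts 0 ∈ D ∧ (P i).verts (Fin.last (P i).len) ∈ D)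
    (hdisj : ∀ i j, i ≠ j → ∀ u, u ∈ Set.range (P i).verts → u ∈ Set.range (P j).verts →
      (P i).IsEndpoint u ∧ (P j).IsEndpoint u)
    (hinc : ∀ u ∈ G.dom, ∃ t ∈ G.edgeTriples, t.2.1 = u ∨ t.2.2 = u)
    (hedges : ∀ t ∈ G.edgeTriples, ∃ i a, (P i).edges a = t) :
    IsSkeleton G k l := by
  let e := Finite.equivFin ι
  have hedges' : ∀ t ∈ G.edgeTriples, ∃ i a, (P (e.symm i)).edges a = t := fun t ht => by
    obtain ⟨i, a, hi⟩ := hedges t ht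
    exact ⟨e i, by rw [e.symm_apply_apply]; exact ⟨a, hi⟩⟩
  refine ⟨D, Nat.card ι, P ∘ e.symm, hDdom, hDfin, hk, hl, fun i => hsimple _, fun i => hends _,
    fun i j hij => hdisj _ _ (e.symm.injective.ne hij), fun u hu => ?_, hedges'⟩
  obtain ⟨t, ht, htu⟩ := hinc u hu
  obtain ⟨i, a, rfl⟩ := hedges' t ht
  have hends := (P (e.symm i)).edges_mem_range_verts a
  exact ⟨i, by rcases htu with rfl | rfl; exacts [hends.1, hends.2]⟩

/-- A dart is an edge with a direction of traversal: `(t, true)` runs from `t.2.1` to `t.2.2`. -/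
abbrev Dart (E : Type) : Type := (E × ℕ × ℕ) × Bool

namespace Dart

def tail (p : Dart E) : ℕ := if p.2 then p.1.2.1 else p.1.2.2

def head (p : Dart E) : ℕ := if p.2 then p.1.2.2 else p.1.2.1

def rev (p : Dart E) : Dart E := (p.1, !p.2)

@[simp] lemma rev_fst (p : Dart E) : p.rev.1 = p.1 := rfl

@[simp] lemma rev_rev (p : Dart E) : p.rev.rev = p := by
  obtain ⟨t, _ | _⟩ := p <;> rfl

@[simp] lemma tail_rev (p : Dart E) : p.rev.tail = p.head := by
  obtain ⟨t, _ | _⟩ := p <;> rfl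

@[simp] lemma head_rev (p : Dart E) : p.rev.head = p.tail := by
  obtain ⟨t, _ | _⟩ := p <;> rfl

lemma rev_ne_self (p : Dart E) : p.rev ≠ p := by
  obtain ⟨t, _ | _⟩ := p <;> simp [rev]

lemma rev_injective : Function.Injective (rev : Dart E → Dart E) :=
  Function.LeftInverse.injective rev_rev

lemma eq_or_eq_rev_of_fst_eq {p q : Dart E} (h : p.1 = q.1) : q = p ∨ q = p.rev := by
  obtain ⟨t, _ | _⟩ := p <;> obtain ⟨s, _ | _⟩ := q <;> simp_all [rev]

lemma snd_fst_eq (p : Dart E) : p.1.2 = (p.tail, p.head) ∨ p.1.2 = (p.head, p.tail) := by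
  obtain ⟨t, _ | _⟩ := p <;> simp [tail, head]

end Dart

namespace Graph

variable (G : Graph N E)

def darts : Set (Dart E) := G.edgeTriples ×ˢ Set.univ

def dartsFrom (u : ℕ) : Set (Dart E) := {p ∈ G.darts | p.tail = u}

variable {G}

lemma rev_mem_darts {p : Dart E} (hp : p ∈ G.darts) : p.rev ∈ G.darts := ⟨hp.1, trivial⟩

lemma tail_mem_dom {p : Dart E} (hp : p ∈ G.darts) : p.tail ∈ G.dom := by
  have h := G.edgeRel_dom _ _ _ hp.1
  obtain ⟨t, _ | _⟩ := p
  exacts [h.2, h.1]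

lemma head_mem_dom {p : Dart E} (hp : p ∈ G.darts) : p.head ∈ G.dom := by
  simpa using tail_mem_dom (rev_mem_darts hp)

lemma darts_finite (hE : G.edgeTriples.Finite) : G.darts.Finite :=
  hE.prod Set.finite_univ

lemma degree_eq_ncard_dartsFrom (u : ℕ) : G.degree u = (G.dartsFrom u).ncard := by
  unfold degree
  congr 1
  ext ⟨t, _ | _⟩ <;> simp [dartsFrom, darts, Dart.tail]

lemma exists_edge_of_degree_ne_zero {u : ℕ} (h : G.degree u ≠ 0) :
    ∃ t ∈ G.edgeTriples, t.2.1 = u ∨ t.2.2 = u := by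
  rw [degree_eq_ncard_dartsFrom] at h
  obtain ⟨q, hq, rfl⟩ := Set.nonempty_of_ncard_ne_zero h
  exact ⟨q.1, hq.1, by rcases Dart.snd_fst_eq q with h | h <;> simp [h]⟩

lemma exists_dart_of_adj {u v : ℕ} (h : G.Adj u v) : ∃ p ∈ G.dartsFrom u, p.head = v := by
  obtain ⟨r, h | h⟩ := h
  · exact ⟨((r, u, v), true), ⟨⟨h, trivial⟩, rfl⟩, rfl⟩
  · exact ⟨((r, v, u), false), ⟨⟨h, trivial⟩, rfl⟩, rfl⟩

lemma ncard_darts : G.darts.ncard = 2 * G.edgeTriples.ncard := by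
  rw [darts, Set.ncard_prod, Set.ncard_univ, Nat.card_eq_fintype_card, Fintype.card_bool,
    mul_comm]

lemma sum_degree (hE : G.edgeTriples.Finite) (s : Finset ℕ) :
    ∑ u ∈ s, G.degree u = {p ∈ G.darts | p.tail ∈ s}.ncard := by
  have hunion : {p ∈ G.darts | p.tail ∈ s} = ⋃ u ∈ (s : Set ℕ), G.dartsFrom u := by
    ext p
    simp [dartsFrom]
  rw [hunion, s.finite_toSet.ncard_biUnion
      (fun u _ => (darts_finite hE).subset fun _ hp => hp.1)
      (fun u _ v _ huv => Set.disjoint_left.2 fun p hu hv => huv (hu.2.symm.trans hv.2)),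
    finsum_mem_coe_finset]
  simp only [degree_eq_ncard_dartsFrom]

lemma sum_degree_dom (hV : G.dom.Finite) (hE : G.edgeTriples.Finite) :
    ∑ u ∈ hV.toFinset, G.degree u = 2 * G.edgeTriples.ncard := by
  rw [sum_degree hE, ← ncard_darts]
  congr 1
  ext p
  simpa using fun hp : p ∈ G.darts => tail_mem_dom hp

lemma sum_degree_le_of_sparse {c : ℕ} (hV : G.dom.Finite) (hE : G.edgeTriples.Finite)
    (hsparse : G.edgeTriples.ncard ≤ G.dom.ncard + c) (hdeg : ∀ u ∈ G.dom, 2 ≤ G.degree u)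
    {D : Finset ℕ} (hD : ↑D ⊆ G.dom) :
    ∑ u ∈ D, G.degree u ≤ 2 * c + 2 * D.card := by
  have hsplit : ∀ s : Finset ℕ, ↑s ⊆ G.dom →
      ∑ u ∈ s, G.degree u = ∑ u ∈ s, (G.degree u - 2) + 2 * s.card := fun s hs => by
    rw [mul_comm, ← smul_eq_mul, ← Finset.sum_const, ← Finset.sum_add_distrib]
    exact Finset.sum_congr rfl fun u hu => by have := hdeg u (hs hu); omega
  have hsub : D ⊆ hV.toFinset := fun u hu => hV.mem_toFinset.2 (hD hu)
  have hexcess := Finset.sum_le_sum_of_subset (f := fun u => G.degree u - 2) hsub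
  have htotal := sum_degree_dom hV hE
  rw [hsplit _ (by simp)] at htotal
  rw [hsplit _ hD]
  rw [Set.ncard_eq_toFinset_card _ hV] at hsparse
  omega
def DegreeTwoOutside (G : Graph N E) (D : Finset ℕ) : Prop :=
  ∀ u ∈ G.dom, u ∉ D → G.degree u = 2

lemma exists_branchSet {c : ℕ} (hc : 1 ≤ c) (hV : G.dom.Finite) (hE : G.edgeTriples.Finite)
    (hsparse : G.edgeTriples.ncard ≤ G.dom.ncard + c) (hdeg : ∀ u ∈ G.dom, 2 ≤ G.degree u) :
    ∃ D : Finset ℕ, ↑D ⊆ G.dom ∧ D.card ≤ 2 * c ∧ G.DegreeTwoOutside D ∧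
      (G.dom.Nonempty → D.Nonempty) := by
  set B := hV.toFinset.filter fun u => 3 ≤ G.degree u
  have hBdom : ↑B ⊆ G.dom := fun u hu => hV.mem_toFinset.1 (Finset.mem_filter.1 hu).1
  have hB2 : ∀ u ∈ G.dom, u ∉ B → G.degree u = 2 := fun u hu huB => by
    have := hdeg u hu
    by_contra
    exact huB (Finset.mem_filter.2 ⟨hV.mem_toFinset.2 hu, by omega⟩)
  by_cases hB : B.Nonempty
  · refine ⟨B, hBdom, ?_, hB2, fun _ => hB⟩
    have h3 : B.card * 3 ≤ ∑ u ∈ B, G.degree u :=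
      Finset.card_nsmul_le_sum B _ 3 fun u hu => (Finset.mem_filter.1 hu).2
    have := sum_degree_le_of_sparse hV hE hsparse hdeg hBdom
    omega
  · have h2 : ∀ u ∈ G.dom, G.degree u = 2 := fun u hu =>
      hB2 u hu fun huB => hB ⟨u, huB⟩
    rcases G.dom.eq_empty_or_nonempty with hV0 | ⟨u₀, hu₀⟩
    · exact ⟨∅, by simp, by simp, fun u hu _ => h2 u hu, by simp [hV0]⟩
    · exact ⟨{u₀}, by simpa using hu₀, by simp; omega, fun u hu _ => h2 u hu,
        fun _ => Finset.singleton_nonempty u₀⟩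

structure IsBranchSet (G : Graph N E) (D : Finset ℕ) : Prop where
  edgeTriples_finite : G.edgeTriples.Finite
  degree_eq_two : G.DegreeTwoOutside D
  reaches : ∀ u ∈ G.dom, ∃ z ∈ D, Relation.ReflTransGen G.Adj u z

section Walk

variable {D : Finset ℕ} {p q : Dart E} {i j k : ℕ}

variable (G) in
open Classical in
/-- The dart continuing `p` through its head; it turns back only when there is no other way. -/
noncomputable def next (p : Dart E) : Dart E :=
  if h : ∃ q ∈ G.dartsFrom p.head, q ≠ p.rev then h.choose else p.rev

lemma next_mem_dartsFrom (hp : p ∈ G.darts) : G.next p ∈ G.dartsFrom p.head := by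
  unfold next
  split_ifs with h
  · exact h.choose_spec.1
  · exact ⟨rev_mem_darts hp, Dart.tail_rev p⟩

lemma next_mem_darts (hp : p ∈ G.darts) : G.next p ∈ G.darts := (next_mem_dartsFrom hp).1

lemma tail_next (hp : p ∈ G.darts) : (G.next p).tail = p.head := (next_mem_dartsFrom hp).2

lemma dartsFrom_head_eq (hp : p ∈ G.darts) (h2 : G.degree p.head = 2) :
    G.dartsFrom p.head = {p.rev, G.next p} ∧ G.next p ≠ p.rev := by
  rw [degree_eq_ncard_dartsFrom] at h2
  have hrev : p.rev ∈ G.dartsFrom p.head := ⟨rev_mem_darts hp, Dart.tail_rev p⟩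
  have hex : ∃ q ∈ G.dartsFrom p.head, q ≠ p.rev := by
    obtain ⟨a, b, hab, hs⟩ := Set.ncard_eq_two.1 h2
    rw [hs] at hrev ⊢
    rcases hrev with rfl | rfl
    · exact ⟨b, by simp, hab.symm⟩
    · exact ⟨a, by simp, hab⟩
  have hne : G.next p ≠ p.rev := by
    rw [next, dif_pos hex]
    exact hex.choose_spec.2
  refine ⟨(Set.eq_of_subset_of_ncard_le ?_ ?_ (Set.finite_of_ncard_pos (by omega))).symm, hne⟩
  · exact Set.insert_subset hrev (Set.singleton_subset_iff.2 (next_mem_dartsFrom hp))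
  · rw [h2, Set.ncard_pair hne.symm]

lemma next_rev_next (hp : p ∈ G.darts) (h2 : G.degree p.head = 2) :
    G.next (G.next p).rev = p.rev := by
  have hq := rev_mem_darts (next_mem_darts hp)
  have hhead : (G.next p).rev.head = p.head := by rw [Dart.head_rev, tail_next hp]
  obtain ⟨hfrom, -⟩ := dartsFrom_head_eq hq (hhead ▸ h2)
  have hrev : p.rev ∈ G.dartsFrom (G.next p).rev.head := ⟨rev_mem_darts hp, by simp [hhead]⟩
  rw [hfrom, Dart.rev_rev] at hrev
  rcases hrev with h | h
  · exact absurd h.symm (dartsFrom_head_eq hp h2).2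
  · exact h.symm

lemma next_injective (hp : p ∈ G.darts) (hq : q ∈ G.darts) (hp2 : G.degree p.head = 2)
    (hq2 : G.degree q.head = 2) (h : G.next p = G.next q) : p = q :=
  Dart.rev_injective <| by rw [← next_rev_next hp hp2, ← next_rev_next hq hq2, h]

variable (G) in
noncomputable def walk (p : Dart E) (i : ℕ) : Dart E := (G.next)^[i] p

@[simp] lemma walk_zero : G.walk p 0 = p := rfl

lemma walk_succ : G.walk p (i + 1) = G.next (G.walk p i) :=
  Function.iterate_succ_apply' _ _ _

lemma walk_add : G.walk p (i + j) = G.walk (G.walk p i) j := by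
  rw [walk, add_comm, Function.iterate_add_apply]
  rfl

lemma walk_mem_darts (hp : p ∈ G.darts) (i : ℕ) : G.walk p i ∈ G.darts := by
  induction i with
  | zero => exact hp
  | succ i ih => rw [walk_succ]; exact next_mem_darts ih

lemma tail_walk_succ (hp : p ∈ G.darts) : (G.walk p (i + 1)).tail = (G.walk p i).head := by
  rw [walk_succ, tail_next (walk_mem_darts hp i)]

variable (G) in
/-- Takes the junk value `0` when the walk from `p` never arrives in `D`. -/
noncomputable def hitTime (D : Finset ℕ) (p : Dart E) : ℕ := sInf {i | (G.walk p i).head ∈ D}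

lemma head_walk_not_mem_of_lt_hitTime (h : i < G.hitTime D p) : (G.walk p i).head ∉ D :=
  Nat.notMem_of_lt_sInf (s := {i | (G.walk p i).head ∈ D}) h

lemma hitTime_le (h : (G.walk p i).head ∈ D) : G.hitTime D p ≤ i := Nat.sInf_le h

lemma head_walk_hitTime_mem (h : ∃ i, (G.walk p i).head ∈ D) :
    (G.walk p (G.hitTime D p)).head ∈ D :=
  Nat.sInf_mem h

lemma le_hitTime (hhit : ∃ i, (G.walk p i).head ∈ D) (hlt : ∀ i < k, (G.walk p i).head ∉ D) :
    k ≤ G.hitTime D p :=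
  not_lt.1 fun h => hlt _ h (head_walk_hitTime_mem hhit)

lemma hitTime_eq (hk : (G.walk p k).head ∈ D) (hlt : ∀ i < k, (G.walk p i).head ∉ D) :
    G.hitTime D p = k :=
  (hitTime_le hk).antisymm (le_hitTime ⟨k, hk⟩ hlt)

lemma degree_head_walk (h2 : G.DegreeTwoOutside D) (hp : p ∈ G.darts)
    (hi : i < G.hitTime D p) : G.degree (G.walk p i).head = 2 :=
  h2 _ (head_mem_dom (walk_mem_darts hp i)) (head_walk_not_mem_of_lt_hitTime hi)

lemma walk_rev_walk (h2 : G.DegreeTwoOutside D) (hp : p ∈ G.darts)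
    (hk : k ≤ G.hitTime D p) (hj : j ≤ k) : G.walk (G.walk p k).rev j = (G.walk p (k - j)).rev := by
  induction j with
  | zero => rfl
  | succ j ih =>
    have hkj : k - j = k - (j + 1) + 1 := by omega
    rw [walk_succ, ih (by omega), hkj, walk_succ,
      next_rev_next (walk_mem_darts hp _) (degree_head_walk h2 hp (by omega))]

lemma walk_ne_walk (hij : i < j) (hj : j ≤ G.hitTime D p) : G.walk p i ≠ G.walk p j := by
  intro h
  have hhit := head_walk_hitTime_mem (Nat.nonempty_of_pos_sInf (show 0 < G.hitTime D p by omega))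
  have hshift : G.walk p (i + (G.hitTime D p - j)) = G.walk p (G.hitTime D p) := by
    rw [walk_add, h, ← walk_add, Nat.add_sub_cancel' hj]
  exact head_walk_not_mem_of_lt_hitTime (by omega) (hshift ▸ hhit)

lemma walk_ne_rev_walk (h2 : G.DegreeTwoOutside D) (hp : p ∈ G.darts)
    (hij : i < j) (hj : j ≤ G.hitTime D p) : G.walk p j ≠ (G.walk p i).rev := by
  intro h
  -- retracing the walk backwards from `j` runs forwards from `i`, so the two meet halfway
  have hmeet : ∀ m ≤ j - i, G.walk p (i + m) = (G.walk p (j - m)).rev := fun m hm => by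
    rw [walk_add, ← Dart.rev_rev (G.walk p i), ← h, walk_rev_walk (j := m) h2 hp hj (by omega)]
  obtain ⟨m, hm | hm⟩ := Nat.even_or_odd' (j - i)
  · have h' := hmeet m (by omega)
    rw [show j - m = i + m by omega] at h'
    exact Dart.rev_ne_self _ h'.symm
  · have h' := hmeet m (by omega)
    rw [show j - m = i + m + 1 by omega, walk_succ] at h'
    have hdeg := degree_head_walk (i := i + m) h2 hp (by omega)
    exact (dartsFrom_head_eq (walk_mem_darts hp _) hdeg).2
      (Dart.rev_injective (by rw [Dart.rev_rev, ← h']))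

lemma walk_fst_ne (h2 : G.DegreeTwoOutside D) (hp : p ∈ G.darts)
    (hij : i < j) (hj : j ≤ G.hitTime D p) : (G.walk p i).1 ≠ (G.walk p j).1 := fun h =>
  (Dart.eq_or_eq_rev_of_fst_eq h).elim (walk_ne_walk hij hj).symm
    (walk_ne_rev_walk h2 hp hij hj)

lemma head_walk_ne (h2 : G.DegreeTwoOutside D) (hp : p ∈ G.darts)
    (hij : i < j) (hj : j < G.hitTime D p) : (G.walk p i).head ≠ (G.walk p j).head := by
  intro h
  have hmem : (G.walk p j).rev ∈ G.dartsFrom (G.walk p i).head :=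
    ⟨rev_mem_darts (walk_mem_darts hp j), by rw [Dart.tail_rev, h]⟩
  rw [(dartsFrom_head_eq (walk_mem_darts hp i) (degree_head_walk h2 hp (by omega))).1,
    ← walk_succ] at hmem
  rcases hmem with h' | h'
  · exact walk_ne_walk hij hj.le (Dart.rev_injective h').symm
  · rcases (Nat.succ_le_of_lt hij).eq_or_lt with rfl | hlt
    · exact Dart.rev_ne_self _ h'
    · exact walk_fst_ne h2 hp hlt hj.le (by rw [← h', Dart.rev_fst])

lemma exists_walk_eq_self (h2 : G.DegreeTwoOutside D)
    (hE : G.edgeTriples.Finite) (hp : p ∈ G.darts) (hnot : ∀ i, (G.walk p i).head ∉ D) :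
    ∃ d, 0 < d ∧ G.walk p d = p := by
  have hdeg i : G.degree (G.walk p i).head = 2 :=
    h2 _ (head_mem_dom (walk_mem_darts hp i)) (hnot i)
  obtain ⟨i, j, hij, heq⟩ :=
    (darts_finite hE).exists_lt_map_eq_of_forall_mem (f := G.walk p) (walk_mem_darts hp)
  have hback : ∀ m ≤ i, G.walk p (i - m) = G.walk p (j - m) := by
    intro m
    induction m with
    | zero => simpa using heq
    | succ m ih =>
      intro hm
      have hi : i - m = i - (m + 1) + 1 := by omega
      have hj : j - m = j - (m + 1) + 1 := by omega
      have h := ih (by omega)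
      rw [hi, hj, walk_succ, walk_succ] at h
      exact next_injective (walk_mem_darts hp _) (walk_mem_darts hp _) (hdeg _) (hdeg _) h
  exact ⟨j - i, by omega, by simpa using (hback i le_rfl).symm⟩

lemma exists_head_walk_mem (hD : G.IsBranchSet D) (hp : p ∈ G.darts) :
    ∃ i, (G.walk p i).head ∈ D := by
  by_contra! hnot
  obtain ⟨d, hd, hper⟩ :=
    exists_walk_eq_self hD.degree_eq_two hD.edgeTriples_finite hp hnot
  -- on a closed walk through degree-two nodes, the visited nodes are closed under adjacency
  set V := {u | ∃ i, (G.walk p i).head = u}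
  have hclosed : ∀ u ∈ V, ∀ v, G.Adj u v → v ∈ V := by
    rintro _ ⟨i, rfl⟩ v huv
    obtain ⟨x, hx, rfl⟩ := exists_dart_of_adj huv
    rw [(dartsFrom_head_eq (walk_mem_darts hp i) (hD.degree_eq_two _
      (head_mem_dom (walk_mem_darts hp i)) (hnot i))).1] at hx
    rcases hx with rfl | rfl
    · refine ⟨i + d - 1, ?_⟩
      rw [Dart.head_rev, ← tail_walk_succ hp, show i + d - 1 + 1 = d + i by omega, walk_add,
        hper]
    · exact ⟨i + 1, walk_succ ▸ rfl⟩
  have htail : p.tail ∈ V :=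
    ⟨d - 1, by rw [← tail_walk_succ hp, Nat.sub_add_cancel hd, hper]⟩
  obtain ⟨z, hz, hreach⟩ := hD.reaches p.tail (tail_mem_dom hp)
  have hreachV : ∀ w, Relation.ReflTransGen G.Adj p.tail w → w ∈ V := fun w hw => by
    induction hw with
    | refl => exact htail
    | tail _ hadj ih => exact hclosed _ ih _ hadj
  obtain ⟨i, rfl⟩ := hreachV z hreach
  exact hnot i hz

variable (G) in
/-- The first dart of the walk from `p` to `D` traversed backwards. -/
noncomputable def partner (D : Finset ℕ) (p : Dart E) : Dart E := (G.walk p (G.hitTime D p)).rev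

lemma head_walk_rev_walk_not_mem (h2 : G.DegreeTwoOutside D)
    (hp : p ∈ G.darts) (hk : k ≤ G.hitTime D p) (hj : j < k) :
    (G.walk (G.walk p k).rev j).head ∉ D := by
  rw [walk_rev_walk h2 hp hk hj.le, Dart.head_rev, show k - j = k - j - 1 + 1 by omega,
    tail_walk_succ hp]
  exact head_walk_not_mem_of_lt_hitTime (by omega)

lemma hitTime_rev_walk (h2 : G.DegreeTwoOutside D) (hp : p ∈ G.darts)
    (hpD : p.tail ∈ D) (hk : k ≤ G.hitTime D p) : G.hitTime D (G.walk p k).rev = k := by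
  refine hitTime_eq ?_ fun j hj => head_walk_rev_walk_not_mem h2 hp hk hj
  rwa [walk_rev_walk h2 hp hk le_rfl, Nat.sub_self, walk_zero, Dart.head_rev]

lemma partner_rev_walk (h2 : G.DegreeTwoOutside D) (hp : p ∈ G.darts)
    (hpD : p.tail ∈ D) (hk : k ≤ G.hitTime D p) : G.partner D (G.walk p k).rev = p := by
  rw [partner, hitTime_rev_walk h2 hp hpD hk, walk_rev_walk h2 hp hk le_rfl, Nat.sub_self,
    walk_zero, Dart.rev_rev]

lemma partner_partner (h2 : G.DegreeTwoOutside D) (hp : p ∈ G.darts)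
    (hpD : p.tail ∈ D) : G.partner D (G.partner D p) = p :=
  partner_rev_walk h2 hp hpD le_rfl

lemma hitTime_partner (h2 : G.DegreeTwoOutside D) (hp : p ∈ G.darts)
    (hpD : p.tail ∈ D) : G.hitTime D (G.partner D p) = G.hitTime D p :=
  hitTime_rev_walk h2 hp hpD le_rfl

lemma partner_ne_self (h2 : G.DegreeTwoOutside D) (hp : p ∈ G.darts) :
    G.partner D p ≠ p := by
  intro h
  rcases Nat.eq_zero_or_pos (G.hitTime D p) with h0 | hpos
  · rw [partner, h0, walk_zero] at h
    exact Dart.rev_ne_self p h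
  · exact walk_fst_ne h2 hp hpos le_rfl (congrArg Prod.fst h).symm

lemma partner_mem_darts (hp : p ∈ G.darts) : G.partner D p ∈ G.darts :=
  rev_mem_darts (walk_mem_darts hp _)

lemma tail_partner_mem (hD : G.IsBranchSet D) (hp : p ∈ G.darts) : (G.partner D p).tail ∈ D := by
  rw [partner, Dart.tail_rev]
  exact head_walk_hitTime_mem (exists_head_walk_mem hD hp)

lemma hitTime_walk (hD : G.IsBranchSet D) (hp : p ∈ G.darts) (hi : i ≤ G.hitTime D p) :
    G.hitTime D (G.walk p i) = G.hitTime D p - i := by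
  refine hitTime_eq ?_ fun j hj => ?_
  · rw [← walk_add, Nat.add_sub_cancel' hi]
    exact head_walk_hitTime_mem (exists_head_walk_mem hD hp)
  · rw [← walk_add]
    exact head_walk_not_mem_of_lt_hitTime (by omega)

lemma partner_walk (hD : G.IsBranchSet D) (hp : p ∈ G.darts) (hi : i ≤ G.hitTime D p) :
    G.partner D (G.walk p i) = G.partner D p := by
  rw [partner, hitTime_walk hD hp hi, ← walk_add, Nat.add_sub_cancel' hi, partner]

lemma rev_walk_eq_walk_partner (h2 : G.DegreeTwoOutside D) (hp : p ∈ G.darts)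
    (hk : k ≤ G.hitTime D p) :
    (G.walk p k).rev = G.walk (G.partner D p) (G.hitTime D p - k) := by
  rw [partner, walk_rev_walk h2 hp le_rfl (by omega), Nat.sub_sub_self hk]

lemma exists_walk_eq (hD : G.IsBranchSet D) (hq : q ∈ G.darts) :
    ∃ p ∈ G.darts, p.tail ∈ D ∧ ∃ k ≤ G.hitTime D p, G.walk p k = q := by
  have hq' := rev_mem_darts hq
  refine ⟨G.partner D q.rev, partner_mem_darts hq', tail_partner_mem hD hq',
    G.hitTime D q.rev, ?_, ?_⟩
  · refine le_hitTime (exists_head_walk_mem hD (partner_mem_darts hq')) fun j hj => ?_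
    exact head_walk_rev_walk_not_mem hD.degree_eq_two hq' le_rfl hj
  · simpa using (rev_walk_eq_walk_partner hD.degree_eq_two hq' (Nat.zero_le _)).symm

lemma exists_fst_walk_eq (hD : G.IsBranchSet D) {t : E × ℕ × ℕ} (ht : t ∈ G.edgeTriples) :
    ∃ p ∈ G.darts, p.tail ∈ D ∧ (∃ k ≤ G.hitTime D p, (G.walk p k).1 = t) ∧
      ∃ k ≤ G.hitTime D (G.partner D p), (G.walk (G.partner D p) k).1 = t := by
  obtain ⟨p, hp, hpD, k, hk, hpk⟩ :=
    exists_walk_eq hD (show ((t, true) : Dart E) ∈ G.darts from ⟨ht, trivial⟩)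
  refine ⟨p, hp, hpD, ⟨k, hk, by rw [hpk]⟩, G.hitTime D p - k,
    by rw [hitTime_partner hD.degree_eq_two hp hpD]; omega, ?_⟩
  rw [← rev_walk_eq_walk_partner hD.degree_eq_two hp hk, Dart.rev_fst, hpk]

lemma eq_or_eq_partner_of_head_walk_eq (hD : G.IsBranchSet D) {p' : Dart E}
    (hp : p ∈ G.darts) (hpD : p.tail ∈ D) (hp' : p' ∈ G.darts) (hp'D : p'.tail ∈ D)
    {k' : ℕ} (hk : k < G.hitTime D p) (hk' : k' < G.hitTime D p')
    (h : (G.walk p' k').head = (G.walk p k).head) : p' = p ∨ p' = G.partner D p := by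
  have h2 := hD.degree_eq_two
  have hmem : (G.walk p' k').rev ∈ G.dartsFrom (G.walk p k).head :=
    ⟨rev_mem_darts (walk_mem_darts hp' k'), by rw [Dart.tail_rev, h]⟩
  rw [(dartsFrom_head_eq (walk_mem_darts hp k) (degree_head_walk h2 hp hk)).1, ← walk_succ]
    at hmem
  rw [← partner_rev_walk h2 hp' hp'D hk'.le]
  rcases hmem with h' | h'
  · left
    rw [h', partner_rev_walk h2 hp hpD hk.le]
  · right
    rw [h', partner_walk hD hp hk]

lemma tail_walk_mem_iff (hD : G.IsBranchSet D) (hp : p ∈ G.darts) (hpD : p.tail ∈ D)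
    (hi : i ≤ G.hitTime D p + 1) : (G.walk p i).tail ∈ D ↔ i = 0 ∨ i = G.hitTime D p + 1 := by
  rcases i with _ | i
  · simpa using hpD
  · rw [tail_walk_succ hp]
    refine ⟨fun h => Or.inr (by have := hitTime_le h; omega), fun h => ?_⟩
    obtain rfl : i = G.hitTime D p := by omega
    exact head_walk_hitTime_mem (exists_head_walk_mem hD hp)

lemma tail_walk_ne (h2 : G.DegreeTwoOutside D) (hp : p ∈ G.darts)
    (hi : 1 ≤ i) (hij : i < j) (hj : j ≤ G.hitTime D p) :
    (G.walk p i).tail ≠ (G.walk p j).tail := by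
  obtain ⟨i, rfl⟩ := Nat.exists_eq_add_of_le' hi
  obtain ⟨j, rfl⟩ := Nat.exists_eq_add_of_le' (hi.trans hij.le)
  rw [tail_walk_succ hp, tail_walk_succ hp]
  exact head_walk_ne h2 hp (by omega) (by omega)

variable (G) in
noncomputable def walkPath (p : Dart E) (hp : p ∈ G.darts) (n : ℕ) : GPath G where
  len := n
  verts i := (G.walk p i).tail
  edges i := (G.walk p i).1
  verts_mem i := tail_mem_dom (walk_mem_darts hp i)
  edges_mem i := (walk_mem_darts hp i).1
  conn i := by
    simp only [Fin.val_castSucc, Fin.val_succ, tail_walk_succ hp]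
    exact Dart.snd_fst_eq _

@[simp] lemma walkPath_len (hp : p ∈ G.darts) (n : ℕ) : (G.walkPath p hp n).len = n := rfl

lemma walkPath_simple (hD : G.IsBranchSet D) (hp : p ∈ G.darts) (hpD : p.tail ∈ D) :
    (G.walkPath p hp (G.hitTime D p + 1)).Simple := by
  refine ⟨fun a b hab => ?_, fun a b hab => ?_⟩
  · have ha : (a : ℕ) < G.hitTime D p + 1 := a.isLt
    have hb : (b : ℕ) < G.hitTime D p + 1 := b.isLt
    by_contra hne
    rcases (Fin.val_ne_of_ne hne).lt_or_gt with h | h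
    · exact walk_fst_ne hD.degree_eq_two hp h (by omega) hab
    · exact walk_fst_ne hD.degree_eq_two hp h (by omega) hab.symm
  · have ha : (a : ℕ) < G.hitTime D p + 2 := a.isLt
    have hb : (b : ℕ) < G.hitTime D p + 2 := b.isLt
    change (G.walk p a).tail = (G.walk p b).tail at hab
    simp only [Fin.ext_iff, Fin.val_zero, Fin.val_last]
    have hlen := walkPath_len hp (G.hitTime D p + 1)
    by_cases hu : (G.walk p a).tail ∈ D
    · have ha' := (tail_walk_mem_iff hD hp hpD (by omega)).1 hu
      have hb' := (tail_walk_mem_iff hD hp hpD (by omega)).1 (hab ▸ hu)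
      omega
    · have ha' := (tail_walk_mem_iff hD hp hpD (by omega)).not.1 hu
      have hb' := (tail_walk_mem_iff hD hp hpD (by omega)).not.1 (hab ▸ hu)
      rcases lt_trichotomy (a : ℕ) b with h | h | h
      · exact absurd hab (tail_walk_ne hD.degree_eq_two hp (by omega) h (by omega))
      · exact Or.inl h
      · exact absurd hab.symm (tail_walk_ne hD.degree_eq_two hp (by omega) h (by omega))

lemma isEndpoint_of_mem_range_verts (hD : G.IsBranchSet D) (hp : p ∈ G.darts)
    (hpD : p.tail ∈ D) {u : ℕ} (hu : u ∈ Set.range (G.walkPath p hp (G.hitTime D p + 1)).verts)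
    (huD : u ∈ D) : (G.walkPath p hp (G.hitTime D p + 1)).IsEndpoint u := by
  obtain ⟨a, rfl⟩ := hu
  have ha : (a : ℕ) < G.hitTime D p + 2 := a.isLt
  rcases (tail_walk_mem_iff hD hp hpD (by omega)).1 huD with h | h
  · exact Or.inl (congrArg _ (Fin.ext h.symm))
  · exact Or.inr (congrArg _ (Fin.ext h.symm))

lemma exists_head_walk_eq_of_mem_range_verts (hD : G.IsBranchSet D) (hp : p ∈ G.darts)
    (hpD : p.tail ∈ D) {u : ℕ} (hu : u ∈ Set.range (G.walkPath p hp (G.hitTime D p + 1)).verts)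
    (huD : u ∉ D) : ∃ k < G.hitTime D p, (G.walk p k).head = u := by
  obtain ⟨a, rfl⟩ := hu
  have ha : (a : ℕ) < G.hitTime D p + 2 := a.isLt
  have ha' := (tail_walk_mem_iff hD hp hpD (by omega)).not.1 huD
  refine ⟨a - 1, by omega, ?_⟩
  change _ = (G.walk p a).tail
  rw [← tail_walk_succ hp, Nat.sub_add_cancel (by omega)]

lemma eq_or_eq_partner_of_mem_range_verts (hD : G.IsBranchSet D) {p' : Dart E}
    (hp : p ∈ G.darts) (hpD : p.tail ∈ D) (hp' : p' ∈ G.darts) (hp'D : p'.tail ∈ D) {u : ℕ}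
    (hu : u ∈ Set.range (G.walkPath p hp (G.hitTime D p + 1)).verts)
    (hu' : u ∈ Set.range (G.walkPath p' hp' (G.hitTime D p' + 1)).verts) (huD : u ∉ D) :
    p' = p ∨ p' = G.partner D p := by
  obtain ⟨k, hk, rfl⟩ := exists_head_walk_eq_of_mem_range_verts hD hp hpD hu huD
  obtain ⟨k', hk', h⟩ := exists_head_walk_eq_of_mem_range_verts hD hp' hp'D hu' huD
  exact eq_or_eq_partner_of_head_walk_eq hD hp hpD hp' hp'D hk hk' h

end Walk

end Graph

theorem Graph.IsBranchSet.isSkeleton {G : Graph N E} {D : Finset ℕ} (hD : G.IsBranchSet D)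
    (hDdom : ↑D ⊆ G.dom) (hpos : ∀ u ∈ G.dom, G.degree u ≠ 0) {k l : ℕ} (hk : D.card ≤ k)
    (hl : ∑ u ∈ D, G.degree u ≤ 2 * l) : IsSkeleton G k l := by
  have h2 := hD.degree_eq_two
  set S := {p ∈ G.darts | p.tail ∈ D}
  have hS : S.Finite := (darts_finite hD.edgeTriples_finite).subset fun p hp => hp.1
  obtain ⟨T, hTS, hTcard, hT⟩ := exists_transversal_of_involution hS (σ := G.partner D)
    (fun p hp => ⟨partner_mem_darts hp.1, tail_partner_mem hD hp.1⟩)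
    (fun p hp => partner_partner h2 hp.1 hp.2) (fun p hp => partner_ne_self h2 hp.1)
  have := (hS.subset hTS).to_subtype
  refine isSkeleton_of_finite (D := ↑D)
    (fun x : T => G.walkPath x (hTS x.2).1 (G.hitTime D x + 1)) hDdom D.finite_toSet
    (by simpa using hk) ?_ (fun x => walkPath_simple hD (hTS x.2).1 (hTS x.2).2)
    (fun x => ⟨(hTS x.2).2, (tail_walk_mem_iff hD (hTS x.2).1 (hTS x.2).2 le_rfl).2 (Or.inr rfl)⟩)
    ?_ (fun u hu => exists_edge_of_degree_ne_zero (hpos u hu)) ?_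
  · have hsum : ∑ u ∈ D, G.degree u = S.ncard := sum_degree hD.edgeTriples_finite D
    rw [Nat.card_coe_set_eq]
    omega
  · intro x y hxy u hux huy
    by_cases huD : u ∈ D
    · exact ⟨isEndpoint_of_mem_range_verts hD (hTS x.2).1 (hTS x.2).2 hux huD,
        isEndpoint_of_mem_range_verts hD (hTS y.2).1 (hTS y.2).2 huy huD⟩
    rcases eq_or_eq_partner_of_mem_range_verts hD (hTS x.2).1 (hTS x.2).2 (hTS y.2).1
      (hTS y.2).2 hux huy huD with h | h
    · exact absurd (Subtype.ext h.symm) hxy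
    · exact absurd (h ▸ y.2) ((hT x (hTS x.2)).1 x.2)
  · intro t ht
    obtain ⟨p, hp, hpD, ⟨i, hi, hpi⟩, ⟨i', hi', hpi'⟩⟩ := exists_fst_walk_eq hD ht
    by_cases hpT : p ∈ T
    · exact ⟨⟨p, hpT⟩, ⟨i, Nat.lt_succ_of_le hi⟩, hpi⟩
    · exact ⟨⟨_, not_not.1 ((hT p ⟨hp, hpD⟩).not.1 hpT)⟩, ⟨i', Nat.lt_succ_of_le hi'⟩, hpi'⟩

/-- For `c ≥ 1`, a finite connected `c`-sparse multigraph all of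
whose nodes have degree at least 2 is a `(2c, 3c)`-skeleton. -/
theorem sparse_min_degree_two_skeleton {N E : Type} (c : ℕ) (hc : 1 ≤ c)
    (G : Graph N E)
    (hdomfin : G.dom.Finite) (hefin : G.edgeTriples.Finite)
    (hconn : G.ConnectedG)
    (hsparse : G.edgeTriples.ncard ≤ G.dom.ncard + c)
    (hdeg : ∀ u ∈ G.dom, 2 ≤ G.degree u) :
    IsSkeleton G (2 * c) (3 * c) := by
  obtain ⟨D, hDdom, hDcard, h2, hDne⟩ := G.exists_branchSet hc hdomfin hefin hsparse hdeg
  have hD : G.IsBranchSet D := by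
    refine ⟨hefin, h2, fun u hu => ?_⟩
    obtain ⟨z, hz⟩ := hDne ⟨u, hu⟩
    exact ⟨z, hz, hconn u hu z (hDdom hz)⟩
  refine hD.isSkeleton hDdom (fun u hu => by have := hdeg u hu; omega) hDcard ?_
  have := G.sum_degree_le_of_sparse hdomfin hefin hsparse hdeg hDdom
  omega

end GDB
end
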